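/- arXiv:2505.10155 — 7 statements merged into one kernel-verified Lean document; each statement's English description precedes it below -/
import Mathlib

section
/- Let (K, ≼) be a weak AEC that is strongly κ⁺-categorical for some cardinal κ ≥ LS(K, ≼) + ℵ₀, let A ∈ K have cardinality κ, and let δ, γ < κ⁺ be limit ordinals with cf(δ) = cf(γ). If B is a (κ, δ)-(K, ≼)-limit model over A and C is a (κ, γ)-(K, ≼)-limit model over A, then there is an isomorphism f : B → C with f ↾ A = id_A. (Uniqueness part of Proposition 3.8.) -/
open FirstOrder Cardinal Set

universe u

/-- A structure for the language `L` whose carrier is a subset of the ambient type `U`. -/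
structure SStr (L : FirstOrder.Language.{u, u}) (U : Type u) where
  carrier : Set U
  str : L.Structure carrier

attribute [instance] SStr.str

namespace SStr

variable {L : FirstOrder.Language.{u, u}} {U : Type u}

/-- `A` is an `L`-substructure of `B`: the carrier of `A` is included in that of `B` and the
inclusion map is an `L`-embedding. -/
def Sub (A B : SStr L U) : Prop :=
  A.carrier ⊆ B.carrier ∧
    ∃ f : A.carrier ↪[L] B.carrier, ∀ x : A.carrier, (f x : U) = (x : U)

/-- An isomorphism `f : A ≃ B` restricts to an isomorphism of `C` (a substructure of `A`)
onto `D` (a substructure of `B`). -/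
def RestrictsTo {A B : SStr L U} (f : A.carrier ≃[L] B.carrier) (C D : SStr L U) : Prop :=
  ∃ g : C.carrier ≃[L] D.carrier,
    ∀ (x : C.carrier) (hx : (x : U) ∈ A.carrier), (g x : U) = (f ⟨x, hx⟩ : U)

end SStr

/-- `B` is the union of the chain `(A i)_{i < δ}`, as a structure: its carrier is the union of
the carriers and each `A i` is a substructure of `B`. -/
def IsUnionOf {L : FirstOrder.Language.{u, u}} {U : Type u} (δ : Ordinal.{u})
    (A : Ordinal.{u} → SStr L U) (B : SStr L U) : Prop :=
  B.carrier = ⋃ j ∈ Set.Iio δ, (A j).carrier ∧ ∀ i, i < δ → (A i).Sub B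

/-- An abstract class of `L`-structures (with carriers inside the ambient type `U`):
a class `K` together with a strong-substructure relation, closed under isomorphism,
with the strong relation a partial order refining the substructure relation. -/
structure AbstractClass (L : FirstOrder.Language.{u, u}) (U : Type u) where
  K : Set (SStr L U)
  strong : SStr L U → SStr L U → Prop
  mem_of_strong_left : ∀ {A B}, strong A B → A ∈ K
  mem_of_strong_right : ∀ {A B}, strong A B → B ∈ K
  iso_mem : ∀ {A B : SStr L U}, A ∈ K → Nonempty (A.carrier ≃[L] B.carrier) → B ∈ K
  iso_strong : ∀ {A B C D : SStr L U}, A ∈ K → strong C A →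
    ∀ f : A.carrier ≃[L] B.carrier, SStr.RestrictsTo f C D → D.Sub B → strong D B
  sub_of_strong : ∀ {A B}, strong A B → A.Sub B
  strong_refl : ∀ {A}, A ∈ K → strong A A
  strong_antisymm : ∀ {A B}, strong A B → strong B A → A = B
  strong_trans : ∀ {A B C}, strong A B → strong B C → strong A C

namespace AbstractClass

variable {L : FirstOrder.Language.{u, u}} {U : Type u}

/-- `(A i)_{i < δ}` is an increasing continuous strong chain of members of `K`. -/
def IsCtsChain (AC : AbstractClass L U) (δ : Ordinal.{u}) (A : Ordinal.{u} → SStr L U) : Prop :=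
  (∀ i, i < δ → A i ∈ AC.K) ∧
  (∀ i j, i < j → j < δ → AC.strong (A i) (A j)) ∧
  (∀ i, i < δ → Order.IsSuccLimit i → (A i).carrier = ⋃ j ∈ Set.Iio i, (A j).carrier)

/-- An `L`-embedding `f : C → B` is strong if its image, as a substructure of `B`,
is a strong substructure of `B`. -/
def IsStrongEmb (AC : AbstractClass L U) {C B : SStr L U} (f : C.carrier ↪[L] B.carrier) : Prop :=
  ∃ D : SStr L U, AC.strong D B ∧
    ∃ g : C.carrier ≃[L] D.carrier, ∀ x : C.carrier, (g x : U) = (f x : U)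

/-- `B` is `(K, ≼)`-universal over `A`. -/
def UnivOver (AC : AbstractClass L U) (B A : SStr L U) : Prop :=
  ∀ C ∈ AC.K, AC.strong A C → #C.carrier = #A.carrier →
    ∃ f : C.carrier ↪[L] B.carrier,
      AC.IsStrongEmb f ∧ ∀ x : C.carrier, (x : U) ∈ A.carrier → (f x : U) = (x : U)

/-- `M` is a `(K, ≼)`-universal model. -/
def IsUniversal (AC : AbstractClass L U) (M : SStr L U) : Prop :=
  ∀ C ∈ AC.K, #C.carrier ≤ #M.carrier →
    ∃ f : C.carrier ↪[L] M.carrier, AC.IsStrongEmb f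

/-- `B` is a `(κ, δ)-(K, ≼)`-limit model over `A`. -/
def IsLimitModelOver (AC : AbstractClass L U) (κ : Cardinal.{u}) (δ : Ordinal.{u})
    (B A : SStr L U) : Prop :=
  ∃ c : Ordinal.{u} → SStr L U,
    c 0 = A ∧
    AC.IsCtsChain δ c ∧
    IsUnionOf δ c B ∧
    (∀ i, i < δ → AC.UnivOver (c (i + 1)) (c i)) ∧
    (∀ i, i < δ → #(c i).carrier = κ)

/-- `(K, ≼)` is strongly `κ⁺`-categorical. -/
def StronglyCat (AC : AbstractClass L U) (κ : Cardinal.{u}) : Prop :=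
  (∃ F ∈ AC.K, #F.carrier = Order.succ κ ∧
      ∀ A ∈ AC.K, #A.carrier = Order.succ κ → Nonempty (A.carrier ≃[L] F.carrier)) ∧
  (∀ A ∈ AC.K, #A.carrier = κ → ∃ B ∈ AC.K, #B.carrier = κ ∧ A ≠ B ∧ AC.strong A B) ∧
  (∀ A ∈ AC.K, #A.carrier = κ → ∃ B ∈ AC.K, #B.carrier = κ ∧ AC.UnivOver B A)

end AbstractClass

/-- A weak AEC: an abstract class closed under unions of continuous strong chains, with a
Löwenheim–Skolem number. Neither Smoothness nor Coherence is assumed. -/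
structure WeakAEC (L : FirstOrder.Language.{u, u}) (U : Type u) extends AbstractClass L U where
  LS : Cardinal.{u}
  LS_ge : L.card + ℵ₀ ≤ LS
  chain_union : ∀ δ : Ordinal.{u}, Order.IsSuccLimit δ → ∀ A : Ordinal.{u} → SStr L U,
    toAbstractClass.IsCtsChain δ A →
    ∃ B, IsUnionOf δ A B ∧ B ∈ K ∧ ∀ i, i < δ → strong (A i) B
  ls : ∀ A ∈ K, ∀ s : Set U, s ⊆ A.carrier →
    ∃ C ∈ K, s ⊆ C.carrier ∧ strong C A ∧ #C.carrier ≤ #s + LS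

/-!
Back-and-forth along `θ = cf δ = cf γ`. By transfinite recursion on `α < θ` build strong
embeddings `f_α : b_{i_α} → c_{j_α}` fixing `A`, each extending the earlier ones and onto the
earlier targets, with `i_α`, `j_α` overtaking the `α`-th terms of cofinal sequences in `δ`, `γ`.
At a successor step, universality of `b_{i+1}` over `b_i` gives a strong map back `c_j → b_{i+1}`
inverting `f_α` on `b_i`, and universality of `c_{j+1}` over `c_j` then gives the next map forth,
whose range contains `c_j`. Universality only applies to strong extensions of `b_i` itself, so the
extension `f_α : b_i → c_j` is first renamed onto a superset of `b_i`; this needs more than `κ`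
points outside `b_i`, and the model of size `κ⁺` given by categoricity provides them. At a limit
`α < cf δ, cf γ` the indices stay below `δ` and `γ`, and by continuity of the chains the union of
the maps is an isomorphism. The union over all `α < θ` is an isomorphism `B ≅ C` over `A`.
-/

open FirstOrder.Language Function

section

variable {L : FirstOrder.Language.{u, u}} {U : Type u}

namespace FirstOrder.Language.Embedding

variable {M N : Type*} [L.Structure M] [L.Structure N]

noncomputable def equivOfSurjective (f : M ↪[L] N) (hf : Surjective f) : M ≃[L] N where
  toEquiv := Equiv.ofBijective f ⟨f.injective, hf⟩
  map_fun' := f.map_fun'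
  map_rel' := f.map_rel'

end FirstOrder.Language.Embedding

namespace SStr

noncomputable def Sub.emb {X Y : SStr L U} (h : X.Sub Y) : X.carrier ↪[L] Y.carrier :=
  h.2.choose

@[simp]
lemma Sub.coe_emb {X Y : SStr L U} (h : X.Sub Y) (x : X.carrier) : (h.emb x : U) = x :=
  h.2.choose_spec x

lemma exists_equiv_range (X : SStr L U) {ψ : X.carrier → U} (hψ : Injective ψ) :
    ∃ (E : SStr L U) (g : X.carrier ≃[L] E.carrier), E.carrier = range ψ ∧ ∀ x, (g x : U) = ψ x :=
  letI := (Equiv.ofInjective ψ hψ).inducedStructure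
  ⟨⟨range ψ, this⟩, (Equiv.ofInjective ψ hψ).inducedStructureEquiv, rfl, fun _ => rfl⟩

lemma exists_embedding_of_local {P Q : SStr L U} (v : P.carrier → Q.carrier)
    (hloc : ∀ {n : ℕ} (xs : Fin n → P.carrier), ∃ (X Y : SStr L U) (hX : X.Sub P) (hY : Y.Sub Q)
      (e : X.carrier ↪[L] Y.carrier) (xs' : Fin n → X.carrier),
        hX.emb ∘ xs' = xs ∧ v ∘ hX.emb = hY.emb ∘ e) :
    ∃ f : P.carrier ↪[L] Q.carrier, ⇑f = v := by
  refine ⟨{ toFun := v, inj' := ?_, map_fun' := ?_, map_rel' := ?_ }, rfl⟩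
  · intro x y hxy
    obtain ⟨X, Y, hX, hY, e, xs', hxs, hv⟩ := hloc ![x, y]
    have hx : hX.emb (xs' 0) = x := congrFun hxs 0
    have hy : hX.emb (xs' 1) = y := congrFun hxs 1
    have hvx := congrFun hv (xs' 0)
    have hvy := congrFun hv (xs' 1)
    simp only [comp_apply, hx, hy] at hvx hvy
    rw [← hx, ← hy, (hY.emb.comp e).injective (hvx.symm.trans (hxy.trans hvy))]
  · intro n φ xs
    obtain ⟨X, Y, hX, hY, e, xs', rfl, hv⟩ := hloc xs
    calc v (Structure.funMap φ (hX.emb ∘ xs')) = v (hX.emb (Structure.funMap φ xs')) := by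
          rw [Embedding.map_fun]
      _ = hY.emb (e (Structure.funMap φ xs')) := congrFun hv _
      _ = Structure.funMap φ (v ∘ hX.emb ∘ xs') := by
          rw [← comp_assoc, hv, comp_assoc, ← Embedding.map_fun, ← Embedding.map_fun]
  · intro n r xs
    obtain ⟨X, Y, hX, hY, e, xs', rfl, hv⟩ := hloc xs
    simp only [← comp_assoc, hv]
    simp only [comp_assoc, Embedding.map_rel]

variable {ι : Type*} [Preorder ι] [IsDirectedOrder ι] [Nonempty ι]

lemma exists_embedding_iUnion {P Q : SStr L U} (X Y : ι → SStr L U)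
    (hXP : ∀ i, (X i).Sub P) (hYQ : ∀ i, (Y i).Sub Q)
    (hXmono : Monotone fun i => (X i).carrier) (hcover : P.carrier ⊆ ⋃ i, (X i).carrier)
    (e : ∀ i, (X i).carrier ↪[L] (Y i).carrier)
    (hcoh : ∀ i i' (h : i ≤ i') (x : (X i).carrier), (e i' ⟨x, hXmono h x.2⟩ : U) = e i x) :
    ∃ f : P.carrier ↪[L] Q.carrier,
      ∀ i (x : P.carrier) (hx : (x : U) ∈ (X i).carrier), (f x : U) = e i ⟨x, hx⟩ := by
  have hidx (x : P.carrier) : ∃ i, (x : U) ∈ (X i).carrier := mem_iUnion.1 (hcover x.2)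
  choose idx hidx using hidx
  let v (x : P.carrier) : Q.carrier := hYQ _ |>.emb (e (idx x) ⟨x, hidx x⟩)
  have hv i (x : P.carrier) (hx : (x : U) ∈ (X i).carrier) : (v x : U) = e i ⟨x, hx⟩ := by
    obtain ⟨k, hik, hk⟩ := directed_of (· ≤ ·) (idx x) i
    simp only [v, Sub.coe_emb]
    rw [← hcoh _ _ hik, ← hcoh _ _ hk]
  obtain ⟨f, hfv⟩ : ∃ f : P.carrier ↪[L] Q.carrier, ⇑f = v := by
    refine exists_embedding_of_local v fun {n} xs => ?_
    obtain ⟨i, hi⟩ := Finite.exists_le (idx ∘ xs)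
    have hxs k : (xs k : U) ∈ (X i).carrier := hXmono (hi k) (hidx (xs k))
    refine ⟨X i, Y i, hXP i, hYQ i, e i, fun k => ⟨xs k, hxs k⟩, ?_, ?_⟩
    · ext k
      simp
    · ext x
      simp only [comp_apply, Sub.coe_emb]
      rw [hv i _ (by simp)]
      simp
  exact ⟨f, hfv ▸ hv⟩

lemma exists_equiv_iUnion {P Q : SStr L U} (X Y : ι → SStr L U)
    (hXP : ∀ i, (X i).Sub P) (hYQ : ∀ i, (Y i).Sub Q)
    (hXmono : Monotone fun i => (X i).carrier) (hPcover : P.carrier ⊆ ⋃ i, (X i).carrier)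
    (e : ∀ i, (X i).carrier ↪[L] (Y i).carrier)
    (hcoh : ∀ i i' (h : i ≤ i') (x : (X i).carrier), (e i' ⟨x, hXmono h x.2⟩ : U) = e i x)
    (hQcover : Q.carrier ⊆ ⋃ i, Subtype.val '' range (e i)) :
    ∃ g : P.carrier ≃[L] Q.carrier,
      ∀ i (x : P.carrier) (hx : (x : U) ∈ (X i).carrier), (g x : U) = e i ⟨x, hx⟩ := by
  obtain ⟨f, hf⟩ := exists_embedding_iUnion X Y hXP hYQ hXmono hPcover e hcoh
  have hsurj : Surjective f := by
    rintro ⟨y, hy⟩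
    obtain ⟨i, -, ⟨x, rfl⟩, rfl⟩ := mem_iUnion.1 (hQcover hy)
    exact ⟨⟨x, (hXP i).1 x.2⟩, Subtype.ext (hf i _ x.2)⟩
  exact ⟨f.equivOfSurjective hsurj, hf⟩

end SStr

namespace AbstractClass

variable {AC : AbstractClass L U}

lemma IsStrongEmb.comp_emb {Y Z Z' : SStr L U} {g : Y.carrier ↪[L] Z.carrier}
    (hg : AC.IsStrongEmb g) (h : AC.strong Z Z') :
    AC.IsStrongEmb ((AC.sub_of_strong h).emb.comp g) := by
  obtain ⟨D, hD, e, he⟩ := hg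
  exact ⟨D, AC.strong_trans hD h, e, fun y => by simp [he]⟩

lemma IsStrongEmb.comp_equiv {E Y Z : SStr L U} {g : E.carrier ↪[L] Z.carrier}
    (hg : AC.IsStrongEmb g) (e : Y.carrier ≃[L] E.carrier) :
    AC.IsStrongEmb (g.comp e.toEmbedding) := by
  obtain ⟨D, hD, e', he'⟩ := hg
  exact ⟨D, hD, e'.comp e, fun y => he' (e y)⟩

lemma exists_copy_over {X Y : SStr L U} {f : X.carrier ↪[L] Y.carrier} (hf : AC.IsStrongEmb f)
    (hroom : #Y.carrier ≤ #(X.carrierᶜ : Set U)) :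
    ∃ (E : SStr L U) (g : Y.carrier ≃[L] E.carrier), AC.strong X E ∧ ∀ x, (g (f x) : U) = x := by
  classical
  obtain ⟨D, hD, h, hh⟩ := hf
  obtain ⟨φ⟩ := hroom
  let ψ (y : Y.carrier) : U :=
    if hy : (y : U) ∈ D.carrier then (h.symm ⟨y, hy⟩ : U) else φ y
  have hψ : Injective ψ := by
    refine Injective.dite (fun y : Y.carrier => (y : U) ∈ D.carrier)
      (f := fun y => (h.symm ⟨y.1, y.2⟩ : U)) (f' := fun y => (φ y.1 : U))
      (fun y z hyz => ?_) (fun y z hyz => ?_) fun {y z hy hz} => ?_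
    · have hyz' := congrArg Subtype.val (h.symm.injective (Subtype.ext hyz))
      ext
      exact hyz'
    · exact Subtype.ext (φ.injective (Subtype.ext hyz))
    · exact fun hyz => (φ z).2 (hyz ▸ (h.symm _).2)
  have hψD (y : Y.carrier) (hy : (y : U) ∈ D.carrier) : ψ y = h.symm ⟨y, hy⟩ := dif_pos hy
  have hψf (x : X.carrier) : ψ (f x) = x := by
    have hfx : (f x : U) ∈ D.carrier := hh x ▸ (h x).2
    rw [hψD _ hfx, show (⟨f x, hfx⟩ : D.carrier) = h x from Subtype.ext (hh x).symm,
      Language.Equiv.symm_apply_apply]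
  obtain ⟨E, g, hE, hg⟩ := Y.exists_equiv_range hψ
  have hgf (x : X.carrier) : (g (f x) : U) = x := (hg _).trans (hψf x)
  have hXE : X.Sub E :=
    ⟨fun x hx => hE ▸ ⟨f ⟨x, hx⟩, hψf _⟩, g.toEmbedding.comp f, hgf⟩
  refine ⟨E, g, AC.iso_strong (AC.mem_of_strong_right hD) hD g ⟨h.symm, fun d hd => ?_⟩ hXE, hgf⟩
  rw [hg, hψD]

lemma UnivOver.exists_isStrongEmb_retract {X Y X' : SStr L U} (huniv : AC.UnivOver X' X)
    {f : X.carrier ↪[L] Y.carrier} (hf : AC.IsStrongEmb f) (hcard : #Y.carrier = #X.carrier)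
    (hroom : #Y.carrier ≤ #(X.carrierᶜ : Set U)) :
    ∃ g : Y.carrier ↪[L] X'.carrier, AC.IsStrongEmb g ∧ ∀ x, (g (f x) : U) = x := by
  obtain ⟨E, g, hXE, hgf⟩ := exists_copy_over hf hroom
  have hEcard : #E.carrier = #X.carrier := (mk_congr g.toEquiv).symm.trans hcard
  obtain ⟨ψ, hψ, hψX⟩ := huniv E (AC.mem_of_strong_right hXE) hXE hEcard
  refine ⟨ψ.comp g.toEmbedding, hψ.comp_equiv g, fun x => ?_⟩
  change (ψ (g (f x)) : U) = x
  rw [hψX _ (by rw [hgf]; exact x.2), hgf]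

lemma exists_back_and_forth {X Y X₁ X₂ Y₁ Y₂ : SStr L U} {f : X.carrier ↪[L] Y.carrier}
    (hf : AC.IsStrongEmb f) (hX₁ : AC.UnivOver X₁ X) (hX₁₂ : AC.strong X₁ X₂)
    (hY₁ : AC.UnivOver Y₁ Y) (hY₁₂ : AC.strong Y₁ Y₂)
    (hYX : #Y.carrier = #X.carrier) (hX₂Y : #X₂.carrier = #Y.carrier)
    (hroomX : #Y.carrier ≤ #(X.carrierᶜ : Set U)) (hroomY : #X₂.carrier ≤ #(Y.carrierᶜ : Set U)) :
    ∃ f' : X₂.carrier ↪[L] Y₂.carrier, AC.IsStrongEmb f' ∧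
      (∀ (x : X₂.carrier) (hx : (x : U) ∈ X.carrier), (f' x : U) = f ⟨x, hx⟩) ∧
      Y.carrier ⊆ Subtype.val '' range f' := by
  obtain ⟨g, hg, hgf⟩ := hX₁.exists_isStrongEmb_retract hf hYX hroomX
  let g' := (AC.sub_of_strong hX₁₂).emb.comp g
  obtain ⟨h, hh, hhg⟩ := hY₁.exists_isStrongEmb_retract (hg.comp_emb hX₁₂) hX₂Y hroomY
  refine ⟨(AC.sub_of_strong hY₁₂).emb.comp h, hh.comp_emb hY₁₂, fun x hx => ?_, fun y hy => ?_⟩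
  · have hx' : x = g' (f ⟨x, hx⟩) := Subtype.ext (by simp [g', hgf])
    conv_lhs => rw [hx']
    simpa [g'] using hhg _
  · exact ⟨_, ⟨g' ⟨y, hy⟩, rfl⟩, by simpa [g'] using hhg _⟩

end AbstractClass

lemma exists_seq_of_exists_next {ι X : Type*} [Preorder ι] [WellFoundedLT ι] [Nonempty X]
    (θ : ι) (P : ι → (ι → X) → X → Prop)
    (hP : ∀ α F F' x, (∀ β < α, F β = F' β) → P α F x → P α F' x)
    (hnext : ∀ α < θ, ∀ F : ι → X, (∀ β < α, P β F (F β)) → ∃ x, P α F x) :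
    ∃ G : ι → X, ∀ α < θ, P α G (G α) := by
  classical
  let G : ι → X := wellFounded_lt.fix fun α IH =>
    Classical.epsilon (P α fun β => if h : β < α then IH β h else Classical.arbitrary X)
  let below (α β : ι) : X := if β < α then G β else Classical.arbitrary X
  have hG α : G α = Classical.epsilon (P α (below α)) := by
    show wellFounded_lt.fix _ α = _
    rw [WellFounded.fix_eq]
    rfl
  have hbelow {α β} (h : β < α) : below α β = G β := if_pos h
  refine ⟨G, fun α => ?_⟩
  induction α using WellFoundedLT.induction with
  | _ α IH =>
    intro hα
    have hprev β (hβ : β < α) : P β (below α) (below α β) := by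
      rw [hbelow hβ]
      exact hP β G _ _ (fun γ hγ => (hbelow (hγ.trans hβ)).symm) (IH β hβ (hβ.trans hα))
    obtain ⟨x, hx⟩ := hnext α hα _ hprev
    rw [hG]
    exact hP α _ G _ (fun β hβ => hbelow hβ) (Classical.epsilon_spec ⟨x, hx⟩)

namespace Ordinal

open Order

lemma exists_isSuccLimit_sup {α c : Ordinal.{u}} (hα : IsSuccLimit α) (hαc : α.card < c.cof)
    {g : Ordinal.{u} → Ordinal.{u}} (hg : ∀ β β', β < β' → β' < α → g β < g β')
    (hgc : ∀ β < α, g β < c) :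
    ∃ σ < c, IsSuccLimit σ ∧ (∀ β < α, g β < σ) ∧ ∀ ξ < σ, ∃ β < α, ξ < g β := by
  let σ := ⨆ β : Iio α, g β
  have hσc : σ < c := by
    refine lift_iSup_lt_of_lt_cof ?_ fun β => hgc β β.2
    rwa [Cardinal.mk_Iio_ordinal, Cardinal.lift_lift, ← lift_cof, Cardinal.lift_lt]
  have hlt β (hβ : β < α) : g β < σ :=
    (hg β _ (lt_succ β) (hα.succ_lt hβ)).trans_le
      (Ordinal.le_iSup (fun β : Iio α => g β) ⟨_, hα.succ_lt hβ⟩)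
  have hbelow ξ (hξ : ξ < σ) : ∃ β < α, ξ < g β := by
    obtain ⟨⟨β, hβ⟩, h⟩ := Ordinal.lt_iSup_iff.1 hξ
    exact ⟨β, hβ, h⟩
  refine ⟨σ, hσc, isSuccLimit_iff.2 ⟨?_, isSuccPrelimit_of_succ_lt fun ξ hξ => ?_⟩, hlt, hbelow⟩
  · exact (hlt 0 hα.pos).ne_bot
  · obtain ⟨β, hβ, hξβ⟩ := hbelow ξ hξ
    exact (succ_le_of_lt hξβ).trans_lt (hlt β hβ)

lemma exists_cofinal_seq {δ : Ordinal.{u}} (hδ : 0 < δ) :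
    ∃ s : Ordinal.{u} → Ordinal.{u}, (∀ β, s β < δ) ∧ ∀ ξ < δ, ∃ β < δ.cof.ord, ξ ≤ s β := by
  obtain ⟨f, hf⟩ := exists_isFundamentalSeq (o := δ) rfl
  classical
  refine ⟨fun β => if h : β < δ.cof.ord then f ⟨β, h⟩ else 0, fun β => ?_, fun ξ hξ => ?_⟩
  · dsimp only
    split_ifs
    exacts [(f _).2, hδ]
  · obtain ⟨_, ⟨⟨β, hβ⟩, rfl⟩, hξβ⟩ := hf.isCofinal_range ⟨ξ, hξ⟩
    exact ⟨β, hβ, by simp only [mem_Iio] at hβ; simp only [dif_pos hβ]; exact hξβ⟩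

end Ordinal

namespace AbstractClass.IsCtsChain

variable {AC : AbstractClass L U} {δ : Ordinal.{u}} {b : Ordinal.{u} → SStr L U}

lemma strong_of_le (h : AC.IsCtsChain δ b) {i j : Ordinal.{u}} (hij : i ≤ j) (hj : j < δ) :
    AC.strong (b i) (b j) := by
  rcases hij.lt_or_eq with hij | rfl
  exacts [h.2.1 i j hij hj, AC.strong_refl (h.1 i hj)]

lemma subset_of_le (h : AC.IsCtsChain δ b) {i j : Ordinal.{u}} (hij : i ≤ j) (hj : j < δ) :
    (b i).carrier ⊆ (b j).carrier :=
  (AC.sub_of_strong (h.strong_of_le hij hj)).1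

end AbstractClass.IsCtsChain

/-- `s` and `t` will be cofinal in `δ` and `γ`: stage `β` of the back-and-forth must overtake
`s β` and `t β`. -/
structure ZigzagData (L : FirstOrder.Language.{u, u}) (U : Type u) where
  AC : AbstractClass L U
  κ : Cardinal.{u}
  A : SStr L U
  δ : Ordinal.{u}
  γ : Ordinal.{u}
  b : Ordinal.{u} → SStr L U
  c : Ordinal.{u} → SStr L U
  s : Ordinal.{u} → Ordinal.{u}
  t : Ordinal.{u} → Ordinal.{u}
  aleph0_le : ℵ₀ ≤ κ
  lt_mk : κ < #U
  isSuccLimit_δ : Order.IsSuccLimit δ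
  isSuccLimit_γ : Order.IsSuccLimit γ
  b_zero : b 0 = A
  c_zero : c 0 = A
  b_chain : AC.IsCtsChain δ b
  c_chain : AC.IsCtsChain γ c
  b_univ : ∀ i < δ, AC.UnivOver (b (i + 1)) (b i)
  c_univ : ∀ i < γ, AC.UnivOver (c (i + 1)) (c i)
  b_card : ∀ i < δ, #(b i).carrier = κ
  c_card : ∀ i < γ, #(c i).carrier = κ
  s_lt : ∀ β, s β < δ
  t_lt : ∀ β, t β < γ

namespace ZigzagData

open Order

variable (S : ZigzagData L U)

lemma le_mk_compl {X : SStr L U} (hX : #X.carrier = S.κ) : S.κ ≤ #(X.carrierᶜ : Set U) := by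
  have : Infinite U := Cardinal.infinite_iff.2 (S.aleph0_le.trans S.lt_mk.le)
  rw [mk_compl_of_infinite _ (hX ▸ S.lt_mk)]
  exact S.lt_mk.le

structure Stage where
  i : Ordinal.{u}
  j : Ordinal.{u}
  f : (S.b i).carrier ↪[L] (S.c j).carrier

instance : Nonempty S.Stage :=
  ⟨⟨0, 0, (S.b_zero.trans S.c_zero.symm) ▸ Language.Embedding.refl L _⟩⟩

variable {S}

/-- `st` is an admissible `α`-th stage of the back-and-forth, given the earlier stages `F β`. -/
structure Stage.Extends (st : S.Stage) (F : Ordinal.{u} → S.Stage) (α : Ordinal.{u}) : Prop where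
  i_lt : st.i < S.δ
  j_lt : st.j < S.γ
  isStrongEmb : S.AC.IsStrongEmb st.f
  map_A : ∀ x : (S.b st.i).carrier, (x : U) ∈ S.A.carrier → (st.f x : U) = x
  lt_i : ∀ β < α, (F β).i < st.i
  lt_j : ∀ β < α, (F β).j < st.j
  s_lt_i : ∀ β < α, S.s β < st.i
  t_lt_j : ∀ β < α, S.t β < st.j
  map_eq : ∀ β < α, ∀ (x : (S.b st.i).carrier) (hx : (x : U) ∈ (S.b (F β).i).carrier),
    (st.f x : U) = (F β).f ⟨x, hx⟩
  subset_range : ∀ β < α, (S.c (F β).j).carrier ⊆ Subtype.val '' range st.f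

lemma Stage.Extends.congr {st : S.Stage} {F F' : Ordinal.{u} → S.Stage} {α : Ordinal.{u}}
    (h : st.Extends F α) (hF : ∀ β < α, F β = F' β) : st.Extends F' α where
  __ := h
  lt_i β hβ := hF β hβ ▸ h.lt_i β hβ
  lt_j β hβ := hF β hβ ▸ h.lt_j β hβ
  map_eq β hβ := hF β hβ ▸ h.map_eq β hβ
  subset_range β hβ := hF β hβ ▸ h.subset_range β hβ

lemma mem_b_of_mem_A {i : Ordinal.{u}} (hi : i < S.δ) {x : U} (hx : x ∈ S.A.carrier) :
    x ∈ (S.b i).carrier :=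
  S.b_chain.subset_of_le zero_le hi (S.b_zero ▸ hx)

lemma exists_extends_zero (F : Ordinal.{u} → S.Stage) : ∃ st : S.Stage, st.Extends F 0 := by
  have h1 : (1 : Ordinal) < S.δ := Ordinal.one_lt_of_isSuccLimit S.isSuccLimit_δ
  have hstrong : S.AC.strong (S.c 0) (S.b 1) := by
    rw [S.c_zero, ← S.b_zero]
    exact S.b_chain.2.1 0 1 zero_lt_one h1
  obtain ⟨f, hf, hfA⟩ := S.c_univ 0 S.isSuccLimit_γ.pos (S.b 1) (S.b_chain.1 1 h1) hstrong
    ((S.b_card 1 h1).trans (S.c_card 0 S.isSuccLimit_γ.pos).symm)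
  refine ⟨⟨1, 0 + 1, f⟩, ⟨h1, S.isSuccLimit_γ.add_one_lt S.isSuccLimit_γ.pos, hf,
    fun x hx => hfA x (S.c_zero ▸ hx), ?_, ?_, ?_, ?_, ?_, ?_⟩⟩ <;>
  simp

lemma Stage.Extends.succ {F : Ordinal.{u} → S.Stage} {α : Ordinal.{u}} (hα : (F α).Extends F α)
    {st : S.Stage} (hi : st.i < S.δ) (hj : st.j < S.γ) (hf : S.AC.IsStrongEmb st.f)
    (hii : (F α).i < st.i) (hjj : (F α).j < st.j) (hsi : S.s α < st.i) (htj : S.t α < st.j)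
    (hmap : ∀ (x : (S.b st.i).carrier) (hx : (x : U) ∈ (S.b (F α).i).carrier),
      (st.f x : U) = (F α).f ⟨x, hx⟩)
    (hrange : (S.c (F α).j).carrier ⊆ Subtype.val '' range st.f) :
    st.Extends F (succ α) := by
  refine ⟨hi, hj, hf, fun x hx => ?_, ?_, ?_, ?_, ?_, ?_, ?_⟩
  · rw [hmap x (S.mem_b_of_mem_A hα.i_lt hx)]
    exact hα.map_A _ hx
  all_goals
    intro β hβ
    rcases (lt_succ_iff.1 hβ).lt_or_eq with hβ | rfl
  · exact (hα.lt_i β hβ).trans hii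
  · exact hii
  · exact (hα.lt_j β hβ).trans hjj
  · exact hjj
  · exact (hα.s_lt_i β hβ).trans hii
  · exact hsi
  · exact (hα.t_lt_j β hβ).trans hjj
  · exact htj
  · intro x hx
    rw [hmap x (S.b_chain.subset_of_le (hα.lt_i β hβ).le hα.i_lt hx)]
    exact hα.map_eq β hβ _ hx
  · exact hmap
  · exact (S.c_chain.subset_of_le (hα.lt_j β hβ).le hα.j_lt).trans hrange
  · exact hrange

lemma exists_extends_succ (F : Ordinal.{u} → S.Stage) {α : Ordinal.{u}}
    (hα : (F α).Extends F α) : ∃ st : S.Stage, st.Extends F (succ α) := by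
  have hδ := S.isSuccLimit_δ
  have hγ := S.isSuccLimit_γ
  set i := max ((F α).i + 1) (S.s α + 1)
  set j := max ((F α).j + 1) (S.t α + 1)
  have hi : i < S.δ := max_lt (hδ.add_one_lt hα.i_lt) (hδ.add_one_lt (S.s_lt α))
  have hj : j < S.γ := max_lt (hγ.add_one_lt hα.j_lt) (hγ.add_one_lt (S.t_lt α))
  obtain ⟨f, hf, hmap, hrange⟩ := S.AC.exists_back_and_forth hα.isStrongEmb
    (S.b_univ _ hα.i_lt) (S.b_chain.strong_of_le (le_max_left _ _) hi)
    (S.c_univ _ hα.j_lt) (S.c_chain.strong_of_le (le_max_left _ _) hj)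
    ((S.c_card _ hα.j_lt).trans (S.b_card _ hα.i_lt).symm)
    ((S.b_card _ hi).trans (S.c_card _ hα.j_lt).symm)
    ((S.c_card _ hα.j_lt).trans_le (S.le_mk_compl (S.b_card _ hα.i_lt)))
    ((S.b_card _ hi).trans_le (S.le_mk_compl (S.c_card _ hα.j_lt)))
  exact ⟨⟨i, j, f⟩, hα.succ hi hj hf ((lt_add_one _).trans_le (le_max_left _ _))
    ((lt_add_one _).trans_le (le_max_left _ _)) ((lt_add_one _).trans_le (le_max_right _ _))
    ((lt_add_one _).trans_le (le_max_right _ _)) hmap hrange⟩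

lemma exists_equiv_of_extends {α : Ordinal.{u}} (hα : IsSuccLimit α) {F : Ordinal.{u} → S.Stage}
    (hF : ∀ β < α, (F β).Extends F β) {P Q : SStr L U}
    (hP : ∀ β < α, (S.b (F β).i).Sub P) (hQ : ∀ β < α, (S.c (F β).j).Sub Q)
    (hPcover : ∀ x ∈ P.carrier, ∃ β < α, x ∈ (S.b (F β).i).carrier)
    (hQcover : ∀ y ∈ Q.carrier, ∃ β < α, y ∈ (S.c (F β).j).carrier) :
    ∃ g : P.carrier ≃[L] Q.carrier,
      (∀ β < α, ∀ (x : P.carrier) (hx : (x : U) ∈ (S.b (F β).i).carrier),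
        (g x : U) = (F β).f ⟨x, hx⟩) ∧
      ∀ x : P.carrier, (x : U) ∈ S.A.carrier → (g x : U) = x := by
  have : Nonempty (Iio α) := ⟨⟨0, hα.pos⟩⟩
  have hmono : Monotone fun β : Iio α => (S.b (F β).i).carrier := fun β β' h => by
    rcases h.lt_or_eq with h | rfl
    exacts [S.b_chain.subset_of_le ((hF β' β'.2).lt_i β h).le (hF β' β'.2).i_lt, subset_rfl]
  obtain ⟨g, hg⟩ := SStr.exists_equiv_iUnion (fun β : Iio α => S.b (F β).i)
    (fun β => S.c (F β).j) (fun β => hP β β.2) (fun β => hQ β β.2) hmono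
    (fun x hx => by
      obtain ⟨β, hβ, hxβ⟩ := hPcover x hx
      exact mem_iUnion.2 ⟨⟨β, hβ⟩, hxβ⟩)
    (fun β => (F β).f)
    (fun β β' h x => by
      rcases h.lt_or_eq with h | rfl
      exacts [(hF β' β'.2).map_eq β h _ x.2, rfl])
    (fun y hy => by
      obtain ⟨β, hβ, hyβ⟩ := hQcover y hy
      exact mem_iUnion.2 ⟨⟨succ β, hα.succ_lt hβ⟩,
        (hF (succ β) (hα.succ_lt hβ)).subset_range β (lt_succ β) hyβ⟩)
  refine ⟨g, fun β hβ => hg ⟨β, hβ⟩, fun x hx => ?_⟩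
  rw [hg ⟨0, hα.pos⟩ x (S.mem_b_of_mem_A (hF 0 hα.pos).i_lt hx)]
  exact (hF 0 hα.pos).map_A _ hx

lemma exists_extends_limit {α : Ordinal.{u}} (hα : IsSuccLimit α) (hαδ : α.card < S.δ.cof)
    (hαγ : α.card < S.γ.cof) {F : Ordinal.{u} → S.Stage} (hF : ∀ β < α, (F β).Extends F β) :
    ∃ st : S.Stage, st.Extends F α := by
  obtain ⟨i, hi, hi_lim, hlt_i, hbelow_i⟩ := Ordinal.exists_isSuccLimit_sup hα hαδ
    (fun β β' h h' => (hF β' h').lt_i β h) fun β hβ => (hF β hβ).i_lt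
  obtain ⟨j, hj, hj_lim, hlt_j, hbelow_j⟩ := Ordinal.exists_isSuccLimit_sup hα hαγ
    (fun β β' h h' => (hF β' h').lt_j β h) fun β hβ => (hF β hβ).j_lt
  obtain ⟨g, hg, hgA⟩ := S.exists_equiv_of_extends hα hF
    (fun β hβ => S.AC.sub_of_strong (S.b_chain.strong_of_le (hlt_i β hβ).le hi))
    (fun β hβ => S.AC.sub_of_strong (S.c_chain.strong_of_le (hlt_j β hβ).le hj))
    (fun x hx => by
      rw [S.b_chain.2.2 i hi hi_lim] at hx
      obtain ⟨ξ, hξ, hxξ⟩ := mem_iUnion₂.1 hx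
      obtain ⟨β, hβ, hξβ⟩ := hbelow_i ξ hξ
      exact ⟨β, hβ, S.b_chain.subset_of_le hξβ.le (hF β hβ).i_lt hxξ⟩)
    (fun y hy => by
      rw [S.c_chain.2.2 j hj hj_lim] at hy
      obtain ⟨ξ, hξ, hyξ⟩ := mem_iUnion₂.1 hy
      obtain ⟨β, hβ, hξβ⟩ := hbelow_j ξ hξ
      exact ⟨β, hβ, S.c_chain.subset_of_le hξβ.le (hF β hβ).j_lt hyξ⟩)
  refine ⟨⟨i, j, g.toEmbedding⟩, ⟨hi, hj,
    ⟨_, S.AC.strong_refl (S.c_chain.1 j hj), g, fun _ => rfl⟩, hgA, hlt_i, hlt_j,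
    fun β hβ => ?_, fun β hβ => ?_, hg, fun β hβ y hy => ?_⟩⟩
  · exact ((hF _ (hα.succ_lt hβ)).s_lt_i β (lt_succ β)).trans (hlt_i _ (hα.succ_lt hβ))
  · exact ((hF _ (hα.succ_lt hβ)).t_lt_j β (lt_succ β)).trans (hlt_j _ (hα.succ_lt hβ))
  · obtain ⟨x, hx⟩ := g.surjective ⟨y, (S.AC.sub_of_strong
      (S.c_chain.strong_of_le (hlt_j β hβ).le hj)).1 hy⟩
    exact ⟨_, ⟨x, rfl⟩, congrArg Subtype.val hx⟩

lemma exists_equiv_over {θ : Ordinal.{u}} (hθ : IsSuccLimit θ) (hθδ : θ ≤ S.δ.cof.ord)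
    (hθγ : θ ≤ S.γ.cof.ord) (hs : ∀ ξ < S.δ, ∃ β < θ, ξ ≤ S.s β)
    (ht : ∀ ξ < S.γ, ∃ β < θ, ξ ≤ S.t β) {B C : SStr L U}
    (hB : IsUnionOf S.δ S.b B) (hC : IsUnionOf S.γ S.c C) :
    ∃ g : B.carrier ≃[L] C.carrier, ∀ x : B.carrier, (x : U) ∈ S.A.carrier → (g x : U) = x := by
  obtain ⟨G, hG⟩ := exists_seq_of_exists_next θ (fun α F (st : S.Stage) => st.Extends F α)
    (fun _ _ _ _ hF h => h.congr hF) fun α hα F hF => by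
      rcases Ordinal.zero_or_succ_or_isSuccLimit α with rfl | ⟨α, rfl⟩ | hlim
      · exact S.exists_extends_zero F
      · exact S.exists_extends_succ F (hF α (lt_succ α))
      · exact S.exists_extends_limit hlim (Cardinal.lt_ord.1 (hα.trans_le hθδ))
          (Cardinal.lt_ord.1 (hα.trans_le hθγ)) hF
  obtain ⟨g, -, hgA⟩ := S.exists_equiv_of_extends hθ hG
    (fun β hβ => hB.2 _ (hG β hβ).i_lt) (fun β hβ => hC.2 _ (hG β hβ).j_lt)
    (fun x hx => by
      rw [hB.1] at hx
      obtain ⟨ξ, hξ, hxξ⟩ := mem_iUnion₂.1 hx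
      obtain ⟨β, hβ, hξβ⟩ := hs ξ hξ
      have hsucc := hG _ (hθ.succ_lt hβ)
      exact ⟨_, hθ.succ_lt hβ,
        S.b_chain.subset_of_le (hξβ.trans (hsucc.s_lt_i β (lt_succ β)).le) hsucc.i_lt hxξ⟩)
    (fun y hy => by
      rw [hC.1] at hy
      obtain ⟨ξ, hξ, hyξ⟩ := mem_iUnion₂.1 hy
      obtain ⟨β, hβ, hξβ⟩ := ht ξ hξ
      have hsucc := hG _ (hθ.succ_lt hβ)
      exact ⟨_, hθ.succ_lt hβ,
        S.c_chain.subset_of_le (hξβ.trans (hsucc.t_lt_j β (lt_succ β)).le) hsucc.j_lt hyξ⟩)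
  exact ⟨g, hgA⟩

end ZigzagData

end

theorem statement1_general {L : FirstOrder.Language.{u, u}} {U : Type u}
    (W : WeakAEC L U) (κ : Cardinal.{u}) (hκ : W.LS + ℵ₀ ≤ κ)
    (hcat : W.toAbstractClass.StronglyCat κ)
    (A : SStr L U)
    (δ γ : Ordinal.{u}) (hδ : Order.IsSuccLimit δ) (hγ : Order.IsSuccLimit γ)
    (hcof : δ.cof = γ.cof)
    (B C : SStr L U)
    (hB : W.toAbstractClass.IsLimitModelOver κ δ B A)
    (hC : W.toAbstractClass.IsLimitModelOver κ γ C A) :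
    ∃ f : B.carrier ≃[L] C.carrier,
      ∀ (x : B.carrier), (x : U) ∈ A.carrier → (f x : U) = (x : U) := by
  obtain ⟨b, hb0, hb, hbB, hbuniv, hbcard⟩ := hB
  obtain ⟨c, hc0, hc, hcC, hcuniv, hccard⟩ := hC
  obtain ⟨s, hs_lt, hs⟩ := Ordinal.exists_cofinal_seq hδ.pos
  obtain ⟨t, ht_lt, ht⟩ := Ordinal.exists_cofinal_seq hγ.pos
  obtain ⟨F, -, hFcard, -⟩ := hcat.1
  have hκU : κ < #U := (Order.lt_succ κ).trans_le (hFcard ▸ mk_subtype_le _)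
  let S : ZigzagData L U := ⟨W.toAbstractClass, κ, A, δ, γ, b, c, s, t, le_add_self.trans hκ,
    hκU, hδ, hγ, hb0, hc0, hb, hc, hbuniv, hcuniv, hbcard, hccard, hs_lt, ht_lt⟩
  have hθ : Order.IsSuccLimit δ.cof.ord :=
    isSuccLimit_ord (Ordinal.aleph0_le_cof_iff.2 (Ordinal.one_lt_cof_iff.2 hδ))
  exact S.exists_equiv_over hθ le_rfl (congrArg Cardinal.ord hcof).le hs (hcof ▸ ht) hbB hcC

/-- uniqueness part of Proposition 3.8: in a strongly `κ⁺`-categorical weak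
AEC, limit models over `A` along limit ordinals of the same cofinality are isomorphic over `A`. -/
theorem statement1 {L : FirstOrder.Language.{u, u}} {U : Type u}
    (W : WeakAEC L U) (κ : Cardinal.{u}) (hκ : W.LS + ℵ₀ ≤ κ)
    (hcat : W.toAbstractClass.StronglyCat κ)
    (A : SStr L U) (hA : A ∈ W.K) (hAcard : #A.carrier = κ)
    (δ γ : Ordinal.{u}) (hδ : Order.IsSuccLimit δ) (hγ : Order.IsSuccLimit γ)
    (hδκ : δ < (Order.succ κ).ord) (hγκ : γ < (Order.succ κ).ord)
    (hcof : δ.cof = γ.cof)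
    (B C : SStr L U)
    (hB : W.toAbstractClass.IsLimitModelOver κ δ B A)
    (hC : W.toAbstractClass.IsLimitModelOver κ γ C A) :
    ∃ f : B.carrier ≃[L] C.carrier,
      ∀ (x : B.carrier), (x : U) ∈ A.carrier → (f x : U) = (x : U) :=
  statement1_general W κ hκ hcat A δ γ hδ hγ hcof B C hB hC
end

section
/- Let (K, ≼) be a weak AEC that is strongly κ⁺-categorical for some cardinal κ ≥ LS(K, ≼) + ℵ₀, let γ < κ⁺ be a limit ordinal, and let (D_i)_{i ≤ α} be a continuous ≼-chain of members of K of cardinality κ such that D_{i+1} is a (κ, γ)-(K, ≼)-limit model over D_i for every i < α. If α is a successor ordinal or cf(α) = γ, then D_α is a (κ, γ)-(K, ≼)-limit model over D₀. (Corollary 3.9.) -/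
open FirstOrder Cardinal Set

universe u

/-!
A limit model is universal over its base: the union axiom gives the witnessing chain a strong
union, and this union is the given model, since a chain determines its union. If `α = β + 1`
with `β ≠ 0`, the chain witnessing that `D (β + 1)` is a limit model over `D β` can be restarted
at `D 0`, because `D β` is already universal over `D 0`. If `cof α = γ`, compose `D` with a normal
function `G` such that `G 0 = 0` and `G γ = α`: normality keeps the composite chain continuous,
and `D (G i + 1)`, universal over `D (G i)`, sits strongly inside `D (G (i + 1))`.
-/

open Order

namespace Ordinal

theorem isNormal_iSup_Iio_add_one {F : Ordinal.{u} → Ordinal.{u}} (hF : StrictMono F) :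
    IsNormal fun a ↦ ⨆ j : Iio a, (F j.1 + 1) := by
  set G : Ordinal.{u} → Ordinal.{u} := fun a ↦ ⨆ j : Iio a, (F j.1 + 1)
  have hG_le : ∀ a, G a ≤ F a := fun a ↦
    Ordinal.iSup_le fun j ↦ add_one_le_iff.2 (hF j.2)
  have lt_hG : ∀ a b, a < b → F a < G b := fun a b hab ↦
    (lt_add_one (F a)).trans_le (Ordinal.le_iSup (fun j : Iio b ↦ F j.1 + 1) ⟨a, hab⟩)
  refine .of_succ_lt (fun a ↦ (hG_le a).trans_lt (lt_hG a _ (lt_succ a))) fun {a} ha ↦ ?_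
  refine ⟨?_, fun b hb ↦ Ordinal.iSup_le fun j ↦ ?_⟩
  · rintro _ ⟨b, hb, rfl⟩
    exact (hG_le b).trans (lt_hG b a hb).le
  · exact add_one_le_iff.2 ((lt_hG j _ (lt_succ j.1)).trans_le
      (hb ⟨succ j.1, ha.succ_lt j.2, rfl⟩))

theorem exists_isNormal_apply_ord_cof_eq (o : Ordinal.{u}) :
    ∃ G : Ordinal.{u} → Ordinal.{u}, IsNormal G ∧ G 0 = 0 ∧ G o.cof.ord = o := by
  obtain ⟨f, hf⟩ := exists_isFundamentalSeq (o := o) rfl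
  -- past `o.cof.ord` the values of `F` only have to keep increasing
  set F : Ordinal.{u} → Ordinal.{u} := fun j ↦ if h : j < o.cof.ord then f ⟨j, h⟩ else o + j
  have hF : StrictMono F := by
    intro i j hij
    by_cases hj : j < o.cof.ord
    · have hi := hij.trans hj
      simpa [F, hi, hj] using hf.strictMono (show (⟨i, hi⟩ : Iio _) < ⟨j, hj⟩ from hij)
    · by_cases hi : i < o.cof.ord
      · simp only [F, hi, hj, dif_pos, dif_neg, not_false_eq_true]
        exact (f ⟨i, hi⟩).2.trans_le le_self_add
      · simpa [F, hi, hj] using hij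
  refine ⟨_, isNormal_iSup_Iio_add_one hF, by simp,
    (iSup_congr fun j : Iio o.cof.ord ↦ ?_).trans hf.iSup_add_one_eq⟩
  simp only [F, dif_pos (show j.1 < o.cof.ord from j.2)]

end Ordinal

theorem Set.biUnion_comp_eq_of_cofinal {ι ι' α : Type*} {s : ι' → Set α} {g : ι → ι'}
    {S : Set ι} {T : Set ι'} (hg : MapsTo g S T) (hcof : ∀ k ∈ T, ∃ i ∈ S, s k ⊆ s (g i)) :
    ⋃ i ∈ S, s (g i) = ⋃ k ∈ T, s k := by
  refine subset_antisymm (iUnion₂_subset fun i hi ↦ subset_biUnion_of_mem (u := s) (hg hi))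
    (iUnion₂_subset fun k hk ↦ ?_)
  obtain ⟨i, hi, hki⟩ := hcof k hk
  exact hki.trans (subset_biUnion_of_mem (u := fun i ↦ s (g i)) hi)

theorem Set.biUnion_eq_of_forall_ne_eq {ι α : Type*} {s t : ι → Set α} {S : Set ι} {p q : ι}
    (hq : q ∈ S) (hqp : q ≠ p) (hst : ∀ j ≠ p, s j = t j) (hs : s p ⊆ s q) (ht : t p ⊆ t q) :
    ⋃ j ∈ S, s j = ⋃ j ∈ S, t j := by
  have key : ∀ s t : ι → Set α, (∀ j ≠ p, s j = t j) → s p ⊆ s q →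
      ⋃ j ∈ S, s j ⊆ ⋃ j ∈ S, t j := fun s t hst hs ↦ iUnion₂_subset fun j hj ↦ by
    rcases eq_or_ne j p with rfl | hjp
    · exact hs.trans (hst q hqp ▸ subset_biUnion_of_mem (u := t) hq)
    · exact hst j hjp ▸ subset_biUnion_of_mem (u := t) hj
  exact (key s t hst hs).antisymm (key t s (fun j hj ↦ (hst j hj).symm) ht)

namespace SStr

open FirstOrder.Language.Structure

variable {L : FirstOrder.Language.{u, u}} {U : Type u}

theorem Sub.trans {A B C : SStr L U} (hAB : A.Sub B) (hBC : B.Sub C) : A.Sub C := by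
  obtain ⟨hAB, f, hf⟩ := hAB
  obtain ⟨hBC, g, hg⟩ := hBC
  exact ⟨hAB.trans hBC, g.comp f, fun x ↦ (hg (f x)).trans (hf x)⟩

theorem Sub.coe_funMap {C B : SStr L U} (h : C.Sub B) {n : ℕ} (F : L.Functions n)
    (x : Fin n → C.carrier) (y : Fin n → B.carrier) (hxy : ∀ k, (y k : U) = x k) :
    ((funMap F y : B.carrier) : U) = funMap F x := by
  obtain ⟨-, e, he⟩ := h
  have hy : y = e ∘ x := funext fun k ↦ Subtype.ext ((hxy k).trans (he (x k)).symm)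
  rw [hy, ← e.map_fun, he]

theorem Sub.relMap_iff {C B : SStr L U} (h : C.Sub B) {n : ℕ} (r : L.Relations n)
    (x : Fin n → C.carrier) (y : Fin n → B.carrier) (hxy : ∀ k, (y k : U) = x k) :
    RelMap r y ↔ RelMap r x := by
  obtain ⟨-, e, he⟩ := h
  have hy : y = e ∘ x := funext fun k ↦ Subtype.ext ((hxy k).trans (he (x k)).symm)
  rw [hy, e.map_rel]

theorem ext {A B : SStr L U} (hcar : A.carrier = B.carrier)
    (hfun : ∀ {n : ℕ} (F : L.Functions n) (x : Fin n → A.carrier) (y : Fin n → B.carrier),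
      (∀ k, (x k : U) = y k) → ((funMap F x : A.carrier) : U) = funMap F y)
    (hrel : ∀ {n : ℕ} (r : L.Relations n) (x : Fin n → A.carrier) (y : Fin n → B.carrier),
      (∀ k, (x k : U) = y k) → (RelMap r x ↔ RelMap r y)) :
    A = B := by
  obtain ⟨A, ⟨funA, relA⟩⟩ := A
  obtain ⟨B, ⟨funB, relB⟩⟩ := B
  obtain rfl : A = B := hcar
  have hf : @funA = @funB := by
    funext n F x
    exact Subtype.ext (hfun F x x fun _ ↦ rfl)
  have hr : @relA = @relB := by
    funext n r x
    exact propext (hrel r x x fun _ ↦ rfl)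
  rw [hf, hr]

end SStr

section Union

variable {L : FirstOrder.Language.{u, u}} {U : Type u} {δ : Ordinal.{u}}
  {c : Ordinal.{u} → SStr L U} {B B' : SStr L U}

theorem IsUnionOf.exists_forall_mem (hδ : 0 < δ)
    (hmono : ∀ {i j}, i ≤ j → j < δ → (c i).carrier ⊆ (c j).carrier)
    (hB : IsUnionOf δ c B) {n : ℕ} (x : Fin n → B.carrier) :
    ∃ j < δ, ∀ k, (x k : U) ∈ (c j).carrier := by
  have hx : ∀ k, ∃ j < δ, (x k : U) ∈ (c j).carrier := fun k ↦ by
    have hk : (x k : U) ∈ ⋃ j ∈ Iio δ, (c j).carrier := hB.1 ▸ (x k).2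
    simpa using hk
  choose j hjδ hj using hx
  have hsup : Finset.univ.sup j < δ := (Finset.sup_lt_iff hδ).2 fun k _ ↦ hjδ k
  exact ⟨_, hsup, fun k ↦ hmono (Finset.le_sup (Finset.mem_univ k)) hsup (hj k)⟩

theorem IsUnionOf.unique (hδ : 0 < δ)
    (hmono : ∀ {i j}, i ≤ j → j < δ → (c i).carrier ⊆ (c j).carrier)
    (hB : IsUnionOf δ c B) (hB' : IsUnionOf δ c B') : B = B' := by
  refine SStr.ext (hB.1.trans hB'.1.symm) (fun F x y hxy ↦ ?_) (fun r x y hxy ↦ ?_)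
  all_goals
    obtain ⟨j, hj, hx⟩ := hB.exists_forall_mem hδ hmono x
    let z : Fin _ → (c j).carrier := fun k ↦ ⟨x k, hx k⟩
  · rw [(hB.2 j hj).coe_funMap F z x fun _ ↦ rfl,
      (hB'.2 j hj).coe_funMap F z y fun k ↦ (hxy k).symm]
  · rw [(hB.2 j hj).relMap_iff r z x fun _ ↦ rfl,
      (hB'.2 j hj).relMap_iff r z y fun k ↦ (hxy k).symm]

end Union

namespace AbstractClass

variable {L : FirstOrder.Language.{u, u}} {U : Type u} {AC : AbstractClass L U}
  {κ : Cardinal.{u}} {γ δ : Ordinal.{u}} {c : Ordinal.{u} → SStr L U}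

theorem IsCtsChain.strong_of_le_s2 (hc : AC.IsCtsChain δ c) {i j : Ordinal.{u}} (hij : i ≤ j)
    (hj : j < δ) : AC.strong (c i) (c j) := by
  rcases hij.eq_or_lt with rfl | hij
  · exact AC.strong_refl (hc.1 i hj)
  · exact hc.2.1 i j hij hj

theorem IsCtsChain.carrier_mono (hc : AC.IsCtsChain δ c) {i j : Ordinal.{u}} (hij : i ≤ j)
    (hj : j < δ) : (c i).carrier ⊆ (c j).carrier :=
  (AC.sub_of_strong (hc.strong_of_le_s2 hij hj)).1

theorem IsCtsChain.carrier_apply_isNormal (hc : AC.IsCtsChain δ c) {G : Ordinal.{u} → Ordinal.{u}}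
    (hG : IsNormal G) {i : Ordinal.{u}} (hi : IsSuccLimit i) (hGi : G i < δ) :
    (c (G i)).carrier = ⋃ j ∈ Iio i, (c (G j)).carrier := by
  rw [hc.2.2 _ hGi (hG.map_isSuccLimit hi)]
  refine (biUnion_comp_eq_of_cofinal (fun j hj ↦ hG.strictMono hj) fun k hk ↦ ?_).symm
  obtain ⟨j, hj, hkj⟩ := (hG.lt_iff_exists_lt hi).1 hk
  exact ⟨j, hj, hc.carrier_mono hkj.le ((hG.strictMono hj).trans hGi)⟩

theorem IsCtsChain.comp_isNormal (hc : AC.IsCtsChain δ c) {G : Ordinal.{u} → Ordinal.{u}}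
    (hG : IsNormal G) (hGγ : G γ ≤ δ) : AC.IsCtsChain γ (c ∘ G) := by
  have hGδ : ∀ i < γ, G i < δ := fun i hi ↦ (hG.strictMono hi).trans_le hGγ
  refine ⟨fun i hi ↦ hc.1 _ (hGδ i hi), fun i j hij hj ↦ hc.2.1 _ _ (hG.strictMono hij) (hGδ j hj),
    fun i hi hlim ↦ hc.carrier_apply_isNormal hG hlim (hGδ i hi)⟩

theorem UnivOver.of_strong {A N B : SStr L U} (hN : AC.UnivOver N A) (hNB : AC.strong N B) :
    AC.UnivOver B A := by
  intro C hC hAC hcard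
  obtain ⟨f, ⟨E, hEN, g, hg⟩, hfA⟩ := hN C hC hAC hcard
  obtain ⟨-, ι, hι⟩ := AC.sub_of_strong hNB
  refine ⟨ι.comp f, ⟨E, AC.strong_trans hEN hNB, g, fun x ↦ ?_⟩, fun x hx ↦ ?_⟩
  · rw [hg x, Language.Embedding.comp_apply, hι]
  · rw [Language.Embedding.comp_apply, hι, hfA x hx]


theorem IsLimitModelOver.of_univOver_base {A A' B : SStr L U} (hγ : IsSuccLimit γ)
    (hB : AC.IsLimitModelOver κ γ B A) (hA'A : AC.strong A' A) (hA : AC.UnivOver A A')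
    (hA' : #A'.carrier = κ) : AC.IsLimitModelOver κ γ B A' := by
  obtain ⟨c, rfl, hc, hcB, hcU, hcκ⟩ := hB
  have h1γ : 1 < γ := Ordinal.one_lt_of_isSuccLimit hγ
  set e := Function.update c 0 A'
  have he0 : e 0 = A' := Function.update_self _ _ _
  have he : ∀ {i}, i ≠ 0 → e i = c i := fun hi ↦ Function.update_of_ne hi _ _
  have hA'c : ∀ {j}, j < γ → AC.strong A' (c j) := fun hj ↦
    AC.strong_trans hA'A (hc.strong_of_le_s2 zero_le hj)
  have hunion : ∀ {i}, 1 < i → ⋃ j ∈ Iio i, (e j).carrier = ⋃ j ∈ Iio i, (c j).carrier :=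
    fun h1i ↦ biUnion_eq_of_forall_ne_eq (p := 0) h1i one_ne_zero
      (fun j hj ↦ by rw [he hj])
      (by rw [he0, he one_ne_zero]; exact (AC.sub_of_strong (hA'c h1γ)).1)
      (hc.carrier_mono zero_le_one h1γ)
  refine ⟨e, he0, ⟨fun i hi ↦ ?_, fun i j hij hj ↦ ?_, fun i hi hlim ↦ ?_⟩, ⟨?_, fun i hi ↦ ?_⟩,
    fun i hi ↦ ?_, fun i hi ↦ ?_⟩
  · rcases eq_or_ne i 0 with rfl | hi0
    · exact he0 ▸ AC.mem_of_strong_left hA'A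
    · exact he hi0 ▸ hc.1 i hi
  · rw [he (zero_le.trans_lt hij).ne']
    rcases eq_or_ne i 0 with rfl | hi0
    · exact he0 ▸ hA'c hj
    · exact he hi0 ▸ hc.2.1 i j hij hj
  · rw [he hlim.ne_bot, hunion (Ordinal.one_lt_of_isSuccLimit hlim), hc.2.2 i hi hlim]
  · rw [hunion h1γ, hcB.1]
  · rcases eq_or_ne i 0 with rfl | hi0
    · exact he0 ▸ (AC.sub_of_strong hA'A).trans (hcB.2 0 hi)
    · exact he hi0 ▸ hcB.2 i hi
  · rw [he (zero_le.trans_lt (lt_add_one i)).ne']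
    rcases eq_or_ne i 0 with rfl | hi0
    · exact he0 ▸ (zero_add (1 : Ordinal)).symm ▸ hA.of_strong (hc.2.1 0 1 zero_lt_one h1γ)
    · exact he hi0 ▸ hcU i hi
  · rcases eq_or_ne i 0 with rfl | hi0
    · exact he0 ▸ hA'
    · exact he hi0 ▸ hcκ i hi

theorem IsCtsChain.isLimitModelOver_of_isNormal {α : Ordinal.{u}} {D : Ordinal.{u} → SStr L U}
    (hD : AC.IsCtsChain (α + 1) D) (hDU : ∀ i < α, AC.UnivOver (D (i + 1)) (D i))
    (hDκ : ∀ i ≤ α, #(D i).carrier = κ) (hγ : IsSuccLimit γ) {G : Ordinal.{u} → Ordinal.{u}}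
    (hG : IsNormal G) (hG0 : G 0 = 0) (hGγ : G γ = α) :
    AC.IsLimitModelOver κ γ (D α) (D 0) := by
  have hGα : ∀ {i}, i < γ → G i < α := fun hi ↦ hGγ ▸ hG.strictMono hi
  have hαD : α < α + 1 := lt_add_one α
  refine ⟨D ∘ G, by simp [hG0], hD.comp_isNormal hG (hGγ ▸ hαD.le),
    ⟨hGγ ▸ hD.carrier_apply_isNormal hG hγ (hGγ ▸ hαD), fun i hi ↦ ?_⟩, fun i hi ↦ ?_,
    fun i hi ↦ hDκ _ (hGα hi).le⟩
  · exact AC.sub_of_strong (hD.2.1 _ _ (hGα hi) hαD)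
  · have hi1 : i + 1 < γ := hγ.add_one_lt hi
    exact (hDU _ (hGα hi)).of_strong (hD.strong_of_le_s2
      (Order.add_one_le_iff.2 (hG.strictMono (lt_add_one i))) ((hGα hi1).trans hαD))

end AbstractClass

theorem WeakAEC.univOver_of_isLimitModelOver {L : FirstOrder.Language.{u, u}} {U : Type u}
    (W : WeakAEC L U) {κ : Cardinal.{u}} {γ : Ordinal.{u}} (hγ : IsSuccLimit γ) {A B : SStr L U}
    (h : W.toAbstractClass.IsLimitModelOver κ γ B A) : W.toAbstractClass.UnivOver B A := by
  obtain ⟨c, rfl, hc, hcB, hcU, -⟩ := h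
  obtain ⟨B', hcB', -, hcB'strong⟩ := W.chain_union γ hγ c hc
  obtain rfl : B = B' := hcB.unique hγ.bot_lt hc.carrier_mono hcB'
  exact (zero_add (1 : Ordinal) ▸ hcU 0 hγ.bot_lt).of_strong
    (hcB'strong 1 (Ordinal.one_lt_of_isSuccLimit hγ))

theorem statement2_general {L : FirstOrder.Language.{u, u}} {U : Type u}
    (W : WeakAEC L U) (κ : Cardinal.{u})
    (γ : Ordinal.{u}) (hγ : Order.IsSuccLimit γ)
    (α : Ordinal.{u}) (D : Ordinal.{u} → SStr L U)
    (hchain : W.toAbstractClass.IsCtsChain (α + 1) D)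
    (hcard : ∀ i, i ≤ α → #(D i).carrier = κ)
    (hlim : ∀ i, i < α → W.toAbstractClass.IsLimitModelOver κ γ (D (i + 1)) (D i))
    (hα : (∃ β, α = β + 1) ∨ α.cof.ord = γ) :
    W.toAbstractClass.IsLimitModelOver κ γ (D α) (D 0) := by
  have hU : ∀ i < α, W.toAbstractClass.UnivOver (D (i + 1)) (D i) := fun i hi ↦
    W.univOver_of_isLimitModelOver hγ (hlim i hi)
  rcases hα with ⟨β, rfl⟩ | rfl
  · rcases eq_or_ne β 0 with rfl | hβ
    · exact hlim 0 (lt_add_one 0)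
    have hβ1 : β < β + 1 + 1 := (lt_add_one β).trans (lt_add_one _)
    have hβU : W.toAbstractClass.UnivOver (D β) (D 0) :=
      (hU 0 (zero_le.trans_lt (lt_add_one β))).of_strong
        (hchain.strong_of_le_s2 (Order.add_one_le_iff.2 (pos_iff_ne_zero.2 hβ)) hβ1)
    exact (hlim β (lt_add_one β)).of_univOver_base hγ (hchain.strong_of_le_s2 zero_le hβ1) hβU
      (hcard 0 zero_le)
  · obtain ⟨G, hG, hG0, hGα⟩ := Ordinal.exists_isNormal_apply_ord_cof_eq α
    exact hchain.isLimitModelOver_of_isNormal hU hcard hγ hG hG0 hGα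

/-- Corollary 3.9: if `(D i)_{i ≤ α}` is a continuous strong chain of members
of `K` of cardinality `κ` in which each `D (i+1)` is a `(κ, γ)`-limit model over `D i`, and `α`
is a successor ordinal or has cofinality `γ`, then `D α` is a `(κ, γ)`-limit model over `D 0`. -/
theorem statement2 {L : FirstOrder.Language.{u, u}} {U : Type u}
    (W : WeakAEC L U) (κ : Cardinal.{u}) (hκ : W.LS + ℵ₀ ≤ κ)
    (hcat : W.toAbstractClass.StronglyCat κ)
    (γ : Ordinal.{u}) (hγ : Order.IsSuccLimit γ) (hγκ : γ < (Order.succ κ).ord)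
    (α : Ordinal.{u}) (D : Ordinal.{u} → SStr L U)
    (hchain : W.toAbstractClass.IsCtsChain (α + 1) D)
    (hcard : ∀ i, i ≤ α → #(D i).carrier = κ)
    (hlim : ∀ i, i < α → W.toAbstractClass.IsLimitModelOver κ γ (D (i + 1)) (D i))
    (hα : (∃ β, α = β + 1) ∨ α.cof.ord = γ) :
    W.toAbstractClass.IsLimitModelOver κ γ (D α) (D 0) :=
  statement2_general W κ γ hγ α D hchain hcard hlim hα
end

section
/- For every type α and every element x of the free group on α with x ≠ 1, there exists k ∈ ℕ such that there is no z in the free group on α with z^(2^k) = x. In other words, a free group contains no nontrivial 2-divisible element. (Key claim in the verification of the Construction Principle CP(K, ∗) for free products of infinite cyclic groups: Lemma 5.8, Case 2 with n = ∞.) -/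
/-!
Write the reduced word of `z` as `c · r · c⁻¹` with `r` cyclically reduced. Then the reduced word
of `z ^ n` (for `n ≠ 0`) is `c · rⁿ · c⁻¹`, so its length grows like `n · |r|`; and `r` is nonempty
unless `z = 1`, since otherwise `z ^ 2 = z`. Hence a nontrivial `x` of length `k` has no
`2 ^ k`-th root, since `k < 2 ^ k`.
-/

namespace FreeGroup

open reduceCyclically

variable {α : Type*} [DecidableEq α]

theorem toWord_pow_of_ne_zero (x : FreeGroup α) {n : ℕ} (hn : n ≠ 0) :
    (x ^ n).toWord = conjugator x.toWord ++
      (List.replicate n (reduceCyclically x.toWord)).flatten ++ invRev (conjugator x.toWord) := by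
  rw [toWord_pow, reduce_flatten_replicate isReduced_toWord, if_neg hn]

theorem norm_pow_of_ne_zero (x : FreeGroup α) {n : ℕ} (hn : n ≠ 0) :
    norm (x ^ n) =
      2 * (conjugator x.toWord).length + n * (reduceCyclically x.toWord).length := by
  simp only [norm, toWord_pow_of_ne_zero x hn, List.length_append, List.length_flatten,
    List.map_replicate, List.sum_replicate, invRev_length, smul_eq_mul]
  ring

theorem reduceCyclically_toWord_ne_nil {x : FreeGroup α} (hx : x ≠ 1) :
    reduceCyclically x.toWord ≠ [] := by
  intro h
  have hsq : x ^ 2 = x ^ 1 := toWord_injective <| by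
    simp only [toWord_pow_of_ne_zero x two_ne_zero, toWord_pow_of_ne_zero x one_ne_zero, h,
      List.flatten_replicate_nil]
  exact hx (by simpa [pow_two] using hsq)

theorem le_norm_pow {x : FreeGroup α} (hx : x ≠ 1) (n : ℕ) : n ≤ norm (x ^ n) := by
  rcases eq_or_ne n 0 with rfl | hn
  · exact Nat.zero_le _
  have hr : 0 < (reduceCyclically x.toWord).length :=
    List.length_pos_iff.mpr (reduceCyclically_toWord_ne_nil hx)
  rw [norm_pow_of_ne_zero x hn]
  nlinarith

theorem not_exists_pow_eq_of_norm_lt {x : FreeGroup α} (hx : x ≠ 1) {n : ℕ} (hn : norm x < n) :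
    ¬ ∃ z : FreeGroup α, z ^ n = x := by
  rintro ⟨z, rfl⟩
  have hz : z ≠ 1 := by rintro rfl; exact hx (one_pow n)
  exact (le_norm_pow hz n).not_gt hn

end FreeGroup

/-- a free group contains no nontrivial 2-divisible element: for every
`x ≠ 1` in a free group there is `k : ℕ` such that `x` has no `2^k`-th root. -/
theorem statement12 {α : Type*} (x : FreeGroup α) (hx : x ≠ 1) :
    ∃ k : ℕ, ¬ ∃ z : FreeGroup α, z ^ (2 ^ k) = x := by
  classical
  exact ⟨FreeGroup.norm x, FreeGroup.not_exists_pow_eq_of_norm_lt hx Nat.lt_two_pow_self⟩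
end

section
/- Let n ∈ ℕ with n > 2, let ι be a type, and let G = ∗_{i∈ι} G_i be the free product of a family of groups each isomorphic to the cyclic group of order n. Then there is no injective function g : ℕ → G with g(0) ≠ 1 and g(i+1)² = g(i) for every i ∈ ℕ. (Key claim in the verification of the Construction Principle CP(K, ∗) for free products of cyclic groups of fixed finite order n > 2: Lemma 5.8, Case 2.) -/
/-!
Call an element of the free product elliptic if it is conjugate into a factor. Elliptic elements
have order dividing `n`, so if every `g k` were elliptic, `g 0, …, g n` would be `n + 1` distinct
elements of the cyclic group generated by `g n`, which has order at most `n`. Otherwise some `g m`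
is not elliptic, and then neither is any `g (m + j)`, because `g m = g (m + j) ^ 2 ^ j`.
A non-elliptic element is conjugate to a cyclically reduced word, whose powers are reduced as they
stand; hence the reduced word of its `N`-th power has length at least `N`. For `2 ^ j` larger
than the length of `g m` this contradicts `g m = g (m + j) ^ 2 ^ j`.
-/

theorem pow_two_pow_of_sq_eq {G : Type*} [Monoid G] {g : ℕ → G}
    (hsq : ∀ i, g (i + 1) ^ 2 = g i) (m j : ℕ) : g (m + j) ^ 2 ^ j = g m := by
  induction j with
  | zero => simp
  | succ j ih => rw [← ih, ← hsq (m + j), ← pow_mul, ← pow_succ']; rfl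

theorem pow_ne_one_of_injective_of_sq_eq {G : Type*} [Group G] {g : ℕ → G}
    (hinj : Function.Injective g) (hsq : ∀ i, g (i + 1) ^ 2 = g i) {n : ℕ} (hn : 0 < n) :
    g n ^ n ≠ 1 := by
  intro h
  have hmem (k : Fin (n + 1)) : g k ∈ Subgroup.zpowers (g n) := by
    rw [← pow_two_pow_of_sq_eq hsq k (n - k), Nat.add_sub_cancel' (Nat.le_of_lt_succ k.2)]
    exact Subgroup.pow_mem _ (Subgroup.mem_zpowers _) _
  have : Finite (Subgroup.zpowers (g n)) :=
    (isOfFinOrder_iff_pow_eq_one.mpr ⟨n, hn, h⟩).finite_zpowers.to_subtype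
  have hcard := Nat.card_le_card_of_injective
    (fun k : Fin (n + 1) ↦ (⟨g k, hmem k⟩ : Subgroup.zpowers (g n)))
    fun a b hab ↦ Fin.ext (hinj (congrArg Subtype.val hab))
  rw [Nat.card_zpowers, Nat.card_eq_fintype_card, Fintype.card_fin] at hcard
  have := orderOf_le_of_pow_eq_one hn h
  omega

namespace Monoid.CoprodI

variable {ι : Type*} {M : ι → Type*}

section Monoid

variable [∀ i, Monoid (M i)]

theorem NeWord.exists_prod_pow {i j : ι} (w : NeWord M i j) (hji : j ≠ i) (k : ℕ) :
    ∃ v : NeWord M i j, v.prod = w.prod ^ (k + 1) ∧ v.toList.length = (k + 1) * w.toList.length := by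
  induction k with
  | zero => exact ⟨w, by simp, by simp⟩
  | succ k ih =>
    obtain ⟨v, hv, hlen⟩ := ih
    refine ⟨.append w hji v, by rw [NeWord.append_prod, hv, ← pow_succ'], ?_⟩
    simp only [NeWord.toList, List.length_append, hlen]
    ring

theorem Word.exists_neWord_prod_eq {w : Word M} {i j : ι} {a : M i} {b : M j}
    {l : List (Σ i, M i)} (hw : w.toList = ⟨i, a⟩ :: (l ++ [⟨j, b⟩])) :
    ∃ v : NeWord M i j, v.prod = w.prod := by
  obtain ⟨i', j', v, hv⟩ := NeWord.of_word w (by rintro rfl; simp at hw)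
  have hlist : v.toList = w.toList := congrArg Word.toList hv
  have hhead := v.toList_head?
  have hlast := v.toList_getLast?
  rw [hlist, hw] at hhead
  rw [hlist, hw, ← List.cons_append, List.getLast?_concat] at hlast
  simp only [List.head?_cons, Option.some.injEq, Sigma.mk.injEq] at hhead hlast
  obtain ⟨rfl, -⟩ := hhead
  obtain ⟨rfl, -⟩ := hlast
  exact ⟨v, congrArg Word.prod hv⟩

variable [∀ i, DecidableEq (M i)]

namespace Word

theorem length_rcons_le {i : ι} (p : Pair M i) :
    (rcons p).toList.length ≤ p.tail.toList.length + 1 := by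
  rw [rcons]; split <;> simp

theorem length_tail_le_length_rcons {i : ι} (p : Pair M i) :
    p.tail.toList.length ≤ (rcons p).toList.length := by
  rw [rcons]; split <;> simp

variable [DecidableEq ι]

theorem length_of_smul_le {i : ι} (m : M i) (w : Word M) :
    (of m • w).toList.length ≤ w.toList.length + 1 := by
  have htail : (equivPair i w).tail.toList.length ≤ w.toList.length := by
    simpa [← equivPair_symm] using length_tail_le_length_rcons (equivPair i w)
  exact (length_rcons_le _).trans (Nat.add_le_add_right htail 1)

end Word

variable [DecidableEq ι]

def wordLength (x : CoprodI M) : ℕ := (Word.equiv x).toList.length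

theorem wordLength_prod (w : Word M) : wordLength w.prod = w.toList.length := by
  rw [wordLength, show Word.equiv w.prod = w from Word.equiv.apply_symm_apply w]

@[simp]
theorem wordLength_one : wordLength (1 : CoprodI M) = 0 := rfl

theorem wordLength_of_mul_le {i : ι} (m : M i) (x : CoprodI M) :
    wordLength (of m * x) ≤ wordLength x + 1 := by
  change ((of m * x) • Word.empty).toList.length ≤ (x • Word.empty).toList.length + 1
  rw [mul_smul]
  exact Word.length_of_smul_le m _

theorem wordLength_list_prod_mul_le (l : List (Σ i, M i)) (y : CoprodI M) :
    wordLength ((l.map fun p ↦ of p.2).prod * y) ≤ l.length + wordLength y := by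
  induction l with
  | nil => simp
  | cons p l ih =>
    rw [List.map_cons, List.prod_cons, mul_assoc, List.length_cons]
    have := wordLength_of_mul_le p.2 ((l.map fun p ↦ of p.2).prod * y)
    omega

theorem wordLength_mul_le (x y : CoprodI M) : wordLength (x * y) ≤ wordLength x + wordLength y := by
  have h := wordLength_list_prod_mul_le (Word.equiv x).toList y
  rwa [show ((Word.equiv x).toList.map fun p ↦ of p.2).prod = x from
    Word.equiv.symm_apply_apply x] at h

theorem wordLength_pow_le (x : CoprodI M) (k : ℕ) : wordLength (x ^ k) ≤ k * wordLength x := by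
  induction k with
  | zero => simp
  | succ k ih =>
    rw [pow_succ, Nat.succ_mul]
    exact (wordLength_mul_le _ _).trans (Nat.add_le_add_right ih _)

theorem wordLength_neWord_prod {i j : ι} (w : NeWord M i j) :
    wordLength w.prod = w.toList.length :=
  wordLength_prod w.toWord

theorem wordLength_neWord_prod_pow {i j : ι} (w : NeWord M i j) (hij : i ≠ j) (k : ℕ) :
    wordLength (w.prod ^ k) = k * w.toList.length := by
  cases k with
  | zero => simp
  | succ k =>
    obtain ⟨v, hv, hlen⟩ := w.exists_prod_pow hij.symm k
    rw [← hv, wordLength_neWord_prod, hlen]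

end Monoid

section Group

variable [∀ i, Group (M i)]

/-- `x = 1` is listed separately so that the notion is right for an empty index type. -/
def IsElliptic (x : CoprodI M) : Prop :=
  x = 1 ∨ ∃ (i : ι) (m : M i), IsConj (of m) x

theorem IsElliptic.of_isConj {x y : CoprodI M} (hy : IsElliptic y) (h : IsConj y x) :
    IsElliptic x := by
  rcases hy with rfl | ⟨i, m, hm⟩
  · exact .inl (isConj_one_right.mp h)
  · exact .inr ⟨i, m, hm.trans h⟩

theorem IsElliptic.pow {x : CoprodI M} (hx : IsElliptic x) (k : ℕ) : IsElliptic (x ^ k) := by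
  rcases hx with rfl | ⟨i, m, hm⟩
  · exact .inl (one_pow k)
  · exact .inr ⟨i, m ^ k, by simpa only [map_pow] using hm.pow k⟩

theorem IsElliptic.pow_eq_one {x : CoprodI M} (hx : IsElliptic x) {n : ℕ}
    (hexp : ∀ (i : ι) (m : M i), m ^ n = 1) : x ^ n = 1 := by
  rcases hx with rfl | ⟨i, m, hm⟩
  · exact one_pow n
  · obtain ⟨c, rfl⟩ := isConj_iff.mp hm
    rw [conj_pow, ← map_pow, hexp, map_one, mul_one, mul_inv_cancel]

variable [DecidableEq ι] [∀ i, DecidableEq (M i)]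

theorem isElliptic_or_exists_neWord (x : CoprodI M) :
    IsElliptic x ∨ ∃ (i j : ι) (w : NeWord M i j), i ≠ j ∧ IsConj w.prod x := by
  induction hD : wordLength x using Nat.strong_induction_on generalizing x with
  | _ D ih =>
  obtain ⟨w, rfl⟩ : ∃ w : Word M, w.prod = x := ⟨_, Word.equiv.symm_apply_apply x⟩
  rw [wordLength_prod] at hD
  have hprod : w.prod = (w.toList.map fun p ↦ of p.2).prod := rfl
  rcases hl : w.toList with _ | ⟨⟨i, a⟩, l⟩
  · exact .inl (.inl (by rw [hprod, hl]; rfl))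
  rcases List.eq_nil_or_concat' l with rfl | ⟨mid, ⟨j, b⟩, rfl⟩
  · exact .inl (.inr ⟨i, a, by rw [hprod, hl, List.map_singleton, List.prod_singleton]⟩)
  by_cases hij : i = j
  · subst hij
    set y := of (b * a) * (mid.map fun p ↦ of p.2).prod
    have hconj : IsConj w.prod y := isConj_iff.mpr ⟨of b, by
      simp only [hprod, hl, List.map_cons, List.map_append, List.map_nil, List.prod_cons,
        List.prod_append, List.prod_nil, mul_one, map_mul, y]
      group⟩
    have hlen : wordLength y ≤ mid.length + 1 := by
      simpa only [List.map_cons, List.prod_cons, mul_one, List.length_cons, wordLength_one,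
        add_zero] using wordLength_list_prod_mul_le (⟨i, b * a⟩ :: mid) 1
    rw [hl, List.length_cons, List.length_append, List.length_singleton] at hD
    rcases ih (wordLength y) (by omega) y rfl with h | ⟨i', j', v, hij', hv⟩
    · exact .inl (h.of_isConj hconj.symm)
    · exact .inr ⟨i', j', v, hij', hv.trans hconj.symm⟩
  · obtain ⟨v, hv⟩ := Word.exists_neWord_prod_eq hl
    exact .inr ⟨i, j, v, hij, hv ▸ IsConj.refl _⟩

theorem le_wordLength_pow_of_isConj_neWord_prod {x : CoprodI M} {i j : ι} (w : NeWord M i j)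
    (hij : i ≠ j) (hx : IsConj w.prod x) (N : ℕ) : N ≤ wordLength (x ^ N) := by
  obtain ⟨c, rfl⟩ := isConj_iff.mp hx
  set y := (c * w.prod * c⁻¹) ^ N
  have hw : 1 ≤ w.toList.length := List.length_pos_iff.mpr w.toList_ne_nil
  have hconj (K : ℕ) : c⁻¹ * y ^ K * c = w.prod ^ (K * N) := by
    rw [← pow_mul, conj_pow, mul_comm N K]; group
  have hbound (K : ℕ) : K * N ≤ K * wordLength y + (wordLength c⁻¹ + wordLength c) := calc
    K * N ≤ K * N * w.toList.length := Nat.le_mul_of_pos_right _ hw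
    _ = wordLength (c⁻¹ * y ^ K * c) := by rw [hconj, wordLength_neWord_prod_pow w hij]
    _ ≤ wordLength c⁻¹ + wordLength (y ^ K) + wordLength c :=
      (wordLength_mul_le _ _).trans (Nat.add_le_add_right (wordLength_mul_le _ _) _)
    _ ≤ K * wordLength y + (wordLength c⁻¹ + wordLength c) := by
      have := wordLength_pow_le y K
      omega
  -- the bounded cost of conjugating by `c` is beaten by taking `K` large
  have := hbound (wordLength c⁻¹ + wordLength c + 1)
  nlinarith

theorem le_wordLength_pow_of_not_isElliptic {x : CoprodI M} (hx : ¬ IsElliptic x) (N : ℕ) :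
    N ≤ wordLength (x ^ N) := by
  obtain ⟨i, j, w, hij, hw⟩ := (isElliptic_or_exists_neWord x).resolve_left hx
  exact le_wordLength_pow_of_isConj_neWord_prod w hij hw N

end Group

end Monoid.CoprodI

open Monoid.CoprodI

/-- let `n > 2` and let `G = ∗_{i∈ι} G i` be the free product of a family of
groups each isomorphic to the cyclic group of order `n`. Then there is no injective sequence
`g : ℕ → G` with `g 0 ≠ 1` and `(g (i+1))² = g i` for all `i`. -/
theorem statement13 (n : ℕ) (hn : 2 < n) {ι : Type*} (G : ι → Type*) [∀ i, Group (G i)]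
    (hG : ∀ i, Nonempty (G i ≃* Multiplicative (ZMod n))) :
    ¬ ∃ g : ℕ → Monoid.CoprodI G,
        Function.Injective g ∧ g 0 ≠ 1 ∧ ∀ i : ℕ, (g (i + 1)) ^ 2 = g i := by
  classical
  rintro ⟨g, hinj, -, hsq⟩
  have hexp (i : ι) (a : G i) : a ^ n = 1 := (hG i).some.injective <| by
    rw [map_pow, map_one, ← ofAdd_toAdd ((hG i).some a), ← ofAdd_nsmul, nsmul_eq_mul,
      ZMod.natCast_self, zero_mul, ofAdd_zero]
  by_cases hell : ∀ k, IsElliptic (g k)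
  · exact pow_ne_one_of_injective_of_sq_eq hinj hsq (by omega) ((hell n).pow_eq_one hexp)
  obtain ⟨m, hm⟩ := not_forall.mp hell
  set L := wordLength (g m)
  have hnot : ¬ IsElliptic (g (m + L)) := fun h ↦ hm (pow_two_pow_of_sq_eq hsq m L ▸ h.pow _)
  have := le_wordLength_pow_of_not_isElliptic hnot (2 ^ L)
  rw [pow_two_pow_of_sq_eq hsq] at this
  exact Nat.lt_two_pow_self.not_ge this
end

section
/- Let G = ∗_{i<ω} C_i be the free product of countably many copies of the cyclic group of order 2, and for each i < ω let x_i ∈ G denote the image of the generator of the i-th factor under the canonical injection. Then x₀ does not belong to the subgroup of G generated by { x_{i+1} · x_i · x_{i+1} : i < ω }. (Key claim in the verification of the Construction Principle CP(K, ∗) for free products of cyclic groups of order 2: Lemma 5.8, Case 1.) -/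
/-!
Send `x i` to the transposition `(i i+1)` of `ℕ`. Conjugating `(i i+1)` by `(i+1 i+2)` gives
`(i i+2)`, so every generator `x (i+1) * x i * x (i+1)` of the subgroup goes to a permutation
preserving parity, whereas `x 0` goes to `(0 1)`, which does not.
-/

/-- The image in the free product `∗_{i<ω} C₂` of the generator of the `i`-th copy of the
cyclic group of order 2. -/
def cyclic2Gen (i : ℕ) : Monoid.CoprodI (fun _ : ℕ => Multiplicative (ZMod 2)) :=
  Monoid.CoprodI.of (M := fun _ : ℕ => Multiplicative (ZMod 2)) (i := i)
    (Multiplicative.ofAdd (1 : ZMod 2))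

open Equiv Monoid

noncomputable def zmodMulLift {G : Type*} [Group G] {n : ℕ} (g : G) (hg : g ^ n = 1) :
    Multiplicative (ZMod n) →* G :=
  AddMonoidHom.toMultiplicativeLeft <| ZMod.lift n
    ⟨zmultiplesHom _ (Additive.ofMul g), by
      rw [zmultiplesHom_apply, natCast_zsmul, ← ofMul_pow, hg, ofMul_one]⟩

theorem zmodMulLift_ofAdd_one {G : Type*} [Group G] {n : ℕ} (g : G) (hg : g ^ n = 1) :
    zmodMulLift g hg (Multiplicative.ofAdd 1) = g := by
  rw [zmodMulLift, AddMonoidHom.toMultiplicativeLeft_apply_apply, toAdd_ofAdd, ← Int.cast_one,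
    ZMod.lift_coe, zmultiplesHom_apply, one_zsmul, toMul_ofMul]

def Equiv.Perm.fiberPreserving {α β : Type*} (f : α → β) : Subgroup (Perm α) where
  carrier := {σ | ∀ a, f (σ a) = f a}
  one_mem' _ := rfl
  mul_mem' hσ hτ a := (hσ _).trans (hτ a)
  inv_mem' {σ} hσ a := by simpa using (hσ (σ⁻¹ a)).symm

theorem Equiv.swap_mem_fiberPreserving {α β : Type*} [DecidableEq α] {f : α → β} {a b : α}
    (h : f a = f b) : swap a b ∈ Perm.fiberPreserving f :=
  apply_swap_eq_self h

theorem Equiv.swap_notMem_fiberPreserving {α β : Type*} [DecidableEq α] {f : α → β} {a b : α}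
    (h : f a ≠ f b) : swap a b ∉ Perm.fiberPreserving f :=
  fun hmem => h (by simpa using (hmem a).symm)

noncomputable def adjacentSwapHom :
    CoprodI (fun _ : ℕ => Multiplicative (ZMod 2)) →* Perm ℕ :=
  CoprodI.lift fun i => zmodMulLift (swap i (i + 1)) (by rw [sq, swap_mul_self])

theorem adjacentSwapHom_cyclic2Gen (i : ℕ) : adjacentSwapHom (cyclic2Gen i) = swap i (i + 1) := by
  rw [adjacentSwapHom, cyclic2Gen, CoprodI.lift_of, zmodMulLift_ofAdd_one]

theorem adjacentSwapHom_conj (i : ℕ) :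
    adjacentSwapHom (cyclic2Gen (i + 1) * cyclic2Gen i * cyclic2Gen (i + 1)) =
      swap (i + 2) i := by
  simp only [map_mul, adjacentSwapHom_cyclic2Gen]
  exact swap_mul_swap_mul_swap (by omega) (by omega)

/-- let `G = ∗_{i<ω} C i` be the free product of countably many copies of the
cyclic group of order 2, with `x i` the image of the generator of the `i`-th factor. Then
`x 0` is not in the subgroup generated by `{ x (i+1) * x i * x (i+1) : i < ω }`. -/
theorem statement14 :
    cyclic2Gen 0 ∉
      Subgroup.closure
        {y : Monoid.CoprodI (fun _ : ℕ => Multiplicative (ZMod 2)) |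
          ∃ i : ℕ, y = cyclic2Gen (i + 1) * cyclic2Gen i * cyclic2Gen (i + 1)} := by
  intro hmem
  have hparity : adjacentSwapHom (cyclic2Gen 0) ∈ Perm.fiberPreserving (· % 2) := by
    refine Subgroup.mem_comap.mp <| (Subgroup.closure_le _).mpr ?_ hmem
    rintro _ ⟨i, rfl⟩
    rw [SetLike.mem_coe, Subgroup.mem_comap, adjacentSwapHom_conj]
    exact swap_mem_fiberPreserving (by omega)
  rw [adjacentSwapHom_cyclic2Gen] at hparity
  exact swap_notMem_fiberPreserving (by decide) hparity
end

section
/- Let p be a prime and R an additive subgroup of ℚ with 1 ∈ R. In the additive group of finitely supported functions ℕ → ℚ, let B = ⊕_ℕ R (the subgroup of functions all of whose values lie in R), let e_j denote the function with value 1 at j and 0 elsewhere, and let A be the subgroup of B generated by { r·e_j − (p·r)·e_{j+1} : r ∈ R, j ∈ ℕ }. Then in the quotient group B/A the coset e₀ + A is nonzero and, for every k ∈ ℕ, there is y ∈ B/A with p^k · y = e₀ + A; that is, e₀ + A is a nonzero element of infinite p-height in B/A. (Key computation in the proof of Lemma 5.13.) -/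
/-- `⊕_ι R`: the additive subgroup of the finitely supported functions `ι →₀ ℚ` consisting of
those functions all of whose values lie in `R`. -/
noncomputable def rSum (R : AddSubgroup ℚ) (ι : Type*) : AddSubgroup (ι →₀ ℚ) where
  carrier := {f | ∀ a, f a ∈ R}
  zero_mem' := by intro a; simpa using R.zero_mem
  add_mem' := by intro f g hf hg a; simpa using R.add_mem (hf a) (hg a)
  neg_mem' := by intro f hf a; simpa using R.neg_mem (hf a)

theorem single_one_mem_rSum (R : AddSubgroup ℚ) (hR : (1 : ℚ) ∈ R) (j : ℕ) :
    Finsupp.single j (1 : ℚ) ∈ rSum R ℕ := by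
  intro a
  rw [Finsupp.single_apply]
  split
  · exact hR
  · exact R.zero_mem

/-- The subgroup of `B = ⊕_ℕ R` generated by the elements `r·e_j − (p·r)·e_{j+1}`
for `r ∈ R` and `j ∈ ℕ`. -/
noncomputable def relSubgroup (p : ℕ) (R : AddSubgroup ℚ) : AddSubgroup (rSum R ℕ) :=
  AddSubgroup.closure
    {x : rSum R ℕ | ∃ r ∈ R, ∃ j : ℕ,
      (x : ℕ →₀ ℚ) = Finsupp.single j r - Finsupp.single (j + 1) ((p : ℚ) * r)}

/-!
The homomorphism `f ↦ ∑ⱼ f j / pʲ` kills every relation `r·e_j − (p·r)·e_{j+1}`, so it factors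
through `B/A` and sends `e₀ + A` to `1 ≠ 0`. On the other hand the relations telescope to
`e₀ ≡ pᵏ·e_k (mod A)`, so `e_k + A` is a `pᵏ`-th "root" of `e₀ + A`.
-/

noncomputable def weightedSum (p : ℕ) : (ℕ →₀ ℚ) →+ ℚ :=
  Finsupp.liftAddHom fun j => AddMonoidHom.mulRight (((p : ℚ) ^ j)⁻¹)

theorem weightedSum_single (p j : ℕ) (q : ℚ) :
    weightedSum p (Finsupp.single j q) = q / (p : ℚ) ^ j := by
  simp [weightedSum, div_eq_mul_inv]

theorem relSubgroup_le_ker_weightedSum {p : ℕ} (hp : p ≠ 0) (R : AddSubgroup ℚ) :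
    relSubgroup p R ≤ ((weightedSum p).comp (rSum R ℕ).subtype).ker := by
  refine (AddSubgroup.closure_le _).2 ?_
  rintro x ⟨r, -, j, hx⟩
  have hp' : (p : ℚ) ≠ 0 := Nat.cast_ne_zero.2 hp
  simp only [SetLike.mem_coe, AddMonoidHom.mem_ker, AddMonoidHom.coe_comp,
    AddSubgroup.coe_subtype, Function.comp_apply, hx, map_sub, weightedSum_single]
  field_simp
  ring

noncomputable def rSumSingleOne (R : AddSubgroup ℚ) (hR : (1 : ℚ) ∈ R) (j : ℕ) : rSum R ℕ :=
  ⟨Finsupp.single j 1, single_one_mem_rSum R hR j⟩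

section Telescoping

variable (p : ℕ) {R : AddSubgroup ℚ} (hR : (1 : ℚ) ∈ R)

theorem rSumSingleOne_sub_smul_succ_mem_relSubgroup (j : ℕ) :
    rSumSingleOne R hR j - p • rSumSingleOne R hR (j + 1) ∈ relSubgroup p R :=
  AddSubgroup.subset_closure ⟨1, hR, j, by simp [rSumSingleOne, Finsupp.smul_single]⟩

theorem pow_smul_rSumSingleOne_sub_mem_relSubgroup (k : ℕ) :
    (p ^ k) • rSumSingleOne R hR k - rSumSingleOne R hR 0 ∈ relSubgroup p R := by
  induction k with
  | zero => simp
  | succ k ih =>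
    have step := rSumSingleOne_sub_smul_succ_mem_relSubgroup p hR k
    have split : (p ^ (k + 1)) • rSumSingleOne R hR (k + 1) - rSumSingleOne R hR 0 =
        ((p ^ k) • rSumSingleOne R hR k - rSumSingleOne R hR 0) -
          (p ^ k) • (rSumSingleOne R hR k - p • rSumSingleOne R hR (k + 1)) := by
      rw [smul_sub, smul_smul, pow_succ]
      abel
    rw [split]
    exact sub_mem ih (AddSubgroup.nsmul_mem _ step _)

end Telescoping

/-- in the quotient `B/A` of `B = ⊕_ℕ R` by the subgroup `A` generated by the
elements `r·e_j − (p·r)·e_{j+1}`, the coset `e₀ + A` is a nonzero element of infinite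
`p`-height: it is nonzero and for every `k` the equation `p^k · y = e₀ + A` is solvable. -/
theorem statement16 (p : ℕ) (hp : p.Prime) (R : AddSubgroup ℚ) (hR : (1 : ℚ) ∈ R) :
    (QuotientAddGroup.mk (⟨Finsupp.single 0 (1 : ℚ), single_one_mem_rSum R hR 0⟩ : rSum R ℕ) :
        (rSum R ℕ) ⧸ relSubgroup p R) ≠ 0 ∧
      ∀ k : ℕ, ∃ y : (rSum R ℕ) ⧸ relSubgroup p R,
        (p ^ k : ℕ) • y =
          QuotientAddGroup.mk
            (⟨Finsupp.single 0 (1 : ℚ), single_one_mem_rSum R hR 0⟩ : rSum R ℕ) := by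
  refine ⟨fun h => ?_, fun k => ⟨QuotientAddGroup.mk (rSumSingleOne R hR k), ?_⟩⟩
  · have hker := relSubgroup_le_ker_weightedSum hp.ne_zero R
      ((QuotientAddGroup.eq_zero_iff _).1 h)
    simp [weightedSum_single] at hker
  · rw [← QuotientAddGroup.mk_nsmul, QuotientAddGroup.eq_iff_sub_mem]
    exact pow_smul_rSumSingleOne_sub_mem_relSubgroup p hR k
end

section
/- Let p be a prime and R an additive subgroup of ℚ with 1 ∈ R such that there is no r ∈ R with p·r = 1. Let B = ⊕_ℕ R (the subgroup of finitely supported functions ℕ → ℚ all of whose values lie in R), let e_j denote the function with value 1 at j and 0 elsewhere, and let A be the subgroup of B generated by { r·e_j − (p·r)·e_{j+1} : r ∈ R, j ∈ ℕ }. Then for every type ι the quotient group B/A is not isomorphic, as an additive group, to ⊕_ι R. (Core of Lemma 5.13: the union A of the chain (A_i) is not a strong submodel of B in the class of direct sums of copies of a fixed torsion-free abelian group of rank 1 different from ℚ.) -/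
/-!
Modulo `A` we have `r·e_j ≡ p·(r·e_{j+1})`, so every element of `B/A` is divisible by `p`, and
hence by every power of `p`. On the other hand `B/A ≠ 0`: the homomorphism `f ↦ ∑ f_j / p^j`
kills every generator of `A` but not `e_0`. In `⊕_ι R` however only `0` is divisible by all
powers of `p`: if `a/b ∈ p^k R` for all `k`, then `a/p^k ∈ R` for all `k`, and since
`1/p ∉ R` while `1 ∈ R`, this forces `p^k ∣ a` for all `k`, i.e. `a = 0`.
-/

open QuotientAddGroup

def HasInfiniteHeight {G : Type*} [AddMonoid G] (p : ℕ) (x : G) : Prop :=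
  ∀ k : ℕ, ∃ y : G, p ^ k • y = x

section Height

variable {G H : Type*} [AddMonoid G] [AddMonoid H] {p : ℕ}

lemma HasInfiniteHeight.map {x : G} (hx : HasInfiniteHeight p x) (f : G →+ H) :
    HasInfiniteHeight p (f x) := fun k =>
  let ⟨y, hy⟩ := hx k
  ⟨f y, by rw [← map_nsmul, hy]⟩

lemma hasInfiniteHeight_of_nsmul_surjective (h : Function.Surjective fun y : G => p • y)
    (x : G) : HasInfiniteHeight p x := fun k => by
  simpa only [smul_iterate] using h.iterate k x

end Height

section RankOne

variable {p : ℕ} {R : AddSubgroup ℚ}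

lemma prime_dvd_of_div_mem (hp : p.Prime) (hR : (1 : ℚ) ∈ R)
    (hp1 : ¬ ∃ r ∈ R, (p : ℚ) * r = 1) {n : ℤ} (hn : (n : ℚ) / p ∈ R) : (p : ℤ) ∣ n := by
  by_contra hnd
  obtain ⟨u, v, huv⟩ := ((Nat.prime_iff_prime_int.mp hp).coprime_iff_not_dvd.mpr hnd).symm
  have hp0 : (p : ℚ) ≠ 0 := by exact_mod_cast hp.ne_zero
  refine hp1 ⟨u • ((n : ℚ) / p) + v • 1, add_mem (zsmul_mem hn u) (zsmul_mem hR v), ?_⟩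
  have huv' : (u * n + v * p : ℚ) = 1 := by exact_mod_cast huv
  rw [zsmul_eq_mul, zsmul_eq_mul]
  field_simp
  linear_combination huv'

lemma pow_dvd_of_div_pow_mem (hp : p.Prime) (hR : (1 : ℚ) ∈ R)
    (hp1 : ¬ ∃ r ∈ R, (p : ℚ) * r = 1) (k : ℕ) {n : ℤ} (hn : (n : ℚ) / p ^ k ∈ R) :
    (p : ℤ) ^ k ∣ n := by
  induction k generalizing n with
  | zero => simp
  | succ k ih =>
    have hp0 : (p : ℚ) ≠ 0 := by exact_mod_cast hp.ne_zero
    have hdiv : (n : ℚ) / p ∈ R := by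
      convert R.nsmul_mem hn (p ^ k) using 1
      rw [nsmul_eq_mul]
      push_cast
      field_simp
      ring
    obtain ⟨m, rfl⟩ := prime_dvd_of_div_mem hp hR hp1 hdiv
    rw [pow_succ']
    refine mul_dvd_mul_left _ (ih ?_)
    convert hn using 1
    push_cast
    field_simp
    ring

lemma eq_zero_of_hasInfiniteHeight (hp : p.Prime) (hR : (1 : ℚ) ∈ R)
    (hp1 : ¬ ∃ r ∈ R, (p : ℚ) * r = 1) {x : R} (hx : HasInfiniteHeight p x) : x = 0 := by
  have hdvd : ∀ k, (p : ℤ) ^ k ∣ (x : ℚ).num := fun k => by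
    obtain ⟨y, hy⟩ := hx k
    refine pow_dvd_of_div_pow_mem hp hR hp1 k ?_
    have hp0 : (p : ℚ) ≠ 0 := by exact_mod_cast hp.ne_zero
    convert R.nsmul_mem y.2 (x : ℚ).den using 1
    rw [← Rat.mul_den_eq_num, ← hy, AddSubgroup.coe_nsmul, nsmul_eq_mul, nsmul_eq_mul]
    push_cast
    field_simp
  by_contra hx0
  obtain ⟨k, hk⟩ := (Int.finiteMultiplicity_iff (a := p) (b := (x : ℚ).num)).2
    ⟨by simpa using hp.ne_one, Rat.num_ne_zero.2 (by simpa using hx0)⟩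
  exact hk (hdvd (k + 1))

end RankOne

section DirectSum

variable {R : AddSubgroup ℚ} {ι : Type*}

lemma single_mem_rSum {q : ℚ} (hq : q ∈ R) (a : ι) : Finsupp.single a q ∈ rSum R ι := by
  classical
  intro b
  rw [Finsupp.single_apply]
  split
  · exact hq
  · exact R.zero_mem

lemma eq_top_of_single_mem (H : AddSubgroup (rSum R ι))
    (hH : ∀ a q (hq : q ∈ R), ⟨Finsupp.single a q, single_mem_rSum hq a⟩ ∈ H) : H = ⊤ := by
  refine eq_top_iff.2 fun f _ => ?_
  have hsum : f = ∑ a ∈ (f : ι →₀ ℚ).support,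
      ⟨Finsupp.single a ((f : ι →₀ ℚ) a), single_mem_rSum (f.2 a) a⟩ := by
    apply Subtype.ext
    rw [AddSubgroup.val_finsetSum]
    exact (Finsupp.sum_single _).symm
  rw [hsum]
  exact sum_mem fun a _ => hH a _ (f.2 a)

noncomputable def rSum.coord (a : ι) : rSum R ι →+ R :=
  ((Finsupp.applyAddHom a).comp (rSum R ι).subtype).codRestrict R fun f => f.2 a

lemma rSum_eq_zero_of_hasInfiniteHeight {p : ℕ} (hp : p.Prime) (hR : (1 : ℚ) ∈ R)
    (hp1 : ¬ ∃ r ∈ R, (p : ℚ) * r = 1) {x : rSum R ι} (hx : HasInfiniteHeight p x) :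
    x = 0 := by
  ext a
  exact congrArg Subtype.val (eq_zero_of_hasInfiniteHeight hp hR hp1 (hx.map (rSum.coord a)))

end DirectSum

section Quotient

variable (p : ℕ) (R : AddSubgroup ℚ)

lemma relSubgroup_nsmul_surjective :
    Function.Surjective fun y : rSum R ℕ ⧸ relSubgroup p R => p • y := by
  let D : AddSubgroup (rSum R ℕ) :=
    (nsmulAddMonoidHom (α := rSum R ℕ ⧸ relSubgroup p R) p).range.comap (mk' _)
  have hD : D = ⊤ := eq_top_of_single_mem D fun j r hr => by
    refine ⟨mk ⟨Finsupp.single (j + 1) r, single_mem_rSum hr _⟩, ?_⟩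
    rw [nsmulAddMonoidHom_apply, mk'_apply, ← mk_nsmul, QuotientAddGroup.eq]
    refine AddSubgroup.subset_closure ⟨r, hr, j, ?_⟩
    ext i
    simp [sub_eq_neg_add]
  intro x
  obtain ⟨f, rfl⟩ := mk_surjective x
  exact (hD ▸ AddSubgroup.mem_top f : f ∈ D)

noncomputable def sumDivPow : (ℕ →₀ ℚ) →+ ℚ :=
  Finsupp.liftAddHom fun j => AddMonoidHom.mk' (fun q => q / (p : ℚ) ^ j) fun a b => add_div a b _

lemma sumDivPow_single (j : ℕ) (q : ℚ) : sumDivPow p (Finsupp.single j q) = q / (p : ℚ) ^ j := by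
  simp [sumDivPow]

lemma relSubgroup_le_ker_sumDivPow (hp : p ≠ 0) :
    relSubgroup p R ≤ ((sumDivPow p).comp (rSum R ℕ).subtype).ker := by
  rw [relSubgroup, AddSubgroup.closure_le]
  rintro x ⟨r, -, j, hx⟩
  have hp0 : (p : ℚ) ≠ 0 := by exact_mod_cast hp
  simp only [SetLike.mem_coe, AddMonoidHom.mem_ker, AddMonoidHom.comp_apply,
    AddSubgroup.coe_subtype, hx, map_sub, sumDivPow_single]
  field_simp
  ring

lemma mk_single_zero_one_ne_zero (hp : p ≠ 0) (hR : (1 : ℚ) ∈ R) :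
    (mk ⟨Finsupp.single 0 1, single_one_mem_rSum R hR 0⟩ : rSum R ℕ ⧸ relSubgroup p R) ≠ 0 := by
  rw [Ne, eq_zero_iff]
  intro h
  simpa [sumDivPow_single] using relSubgroup_le_ker_sumDivPow p R hp h

end Quotient

/-- if `1 ∈ R ≤ ℚ` and `1/p ∉ R`, then the quotient of `B = ⊕_ℕ R` by the
subgroup `A` generated by the elements `r·e_j − (p·r)·e_{j+1}` is not isomorphic, as an
additive group, to any direct sum `⊕_ι R` of copies of `R`. -/
theorem statement18 (p : ℕ) (hp : p.Prime) (R : AddSubgroup ℚ) (hR : (1 : ℚ) ∈ R)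
    (hp1 : ¬ ∃ r ∈ R, (p : ℚ) * r = 1) (ι : Type*) :
    ¬ Nonempty (((rSum R ℕ) ⧸ relSubgroup p R) ≃+ rSum R ι) := by
  rintro ⟨e⟩
  let x : rSum R ℕ ⧸ relSubgroup p R := mk ⟨Finsupp.single 0 1, single_one_mem_rSum R hR 0⟩
  have hx : HasInfiniteHeight p (e x) :=
    (hasInfiniteHeight_of_nsmul_surjective (relSubgroup_nsmul_surjective p R) x).map
      e.toAddMonoidHom
  exact mk_single_zero_one_ne_zero p R hp.ne_zero hR
    (e.map_eq_zero_iff.1 (rSum_eq_zero_of_hasInfiniteHeight hp hR hp1 hx))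
end
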